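/- arXiv:0908.1500 — 4 statements merged into one kernel-verified Lean document; each statement's English description precedes it below -/
import Mathlib

section
/- Let v ∈ A^+. Then the map Reg sends V(v) into V(Reg(v)) and restricts to a bijection from V(v) onto V(Reg(v)); moreover, for all t, u ∈ V(v), t ≤ u (entrywise) if and only if Reg(t) ≤ Reg(u). Consequently this bijection is an isomorphism of partially ordered sets from (V(v), ≤) to (V(Reg(v)), ≤), and in particular identifies their covering relations. -/
/-! ### Partitions and Young diagrams (rows/columns indexed from 1) -/

/-- An integer partition, encoded as its sequence of row lengths, with
`f 0 = 0` (rows are indexed from `1`), weakly decreasing on positive indices,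
and eventually zero. -/
def IsPartition (f : ℕ → ℕ) : Prop :=
  f 0 = 0 ∧ (∀ i, 1 ≤ i → f (i + 1) ≤ f i) ∧ ∃ N, ∀ i, N ≤ i → f i = 0

/-- The boxes of the Young diagram of `f`, as pairs (row, column) of integers,
both indexed from 1. -/
def cells (f : ℕ → ℕ) : Set (ℤ × ℤ) :=
  {p | 1 ≤ p.1 ∧ 1 ≤ p.2 ∧ p.2 ≤ (f p.1.toNat : ℤ)}

/-- The skew λ/μ of two partitions. -/
def skewOf (lam mu : ℕ → ℕ) : Set (ℤ × ℤ) := cells lam \ cells mu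

/-- The δ-charge of a box `p = (i,j)`: `δ - 1 - 2 (j - i)`. -/
def chg (δ : ℤ) (p : ℤ × ℤ) : ℤ := δ - 1 - 2 * (p.2 - p.1)

/-- The π-rotation of the plane about the point `(a/2, b/2)`, as a map on boxes:
the box `(i,j)` (the unit square `[i-1,i] × [j-1,j]`) is sent to the box
`(a + 1 - i, b + 1 - j)`. -/
def boxRot (a b : ℤ) (p : ℤ × ℤ) : ℤ × ℤ := (a + 1 - p.1, b + 1 - p.2)

/-- Two boxes are adjacent when they share an edge. -/
def adjacentCell (p q : ℤ × ℤ) : Prop := |p.1 - q.1| + |p.2 - q.2| = 1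

/-- A rim: a (nonempty, finite) set of boxes which forms a path under
edge-adjacency (possibly a single box). -/
def IsRim (S : Set (ℤ × ℤ)) : Prop :=
  ∃ (n : ℕ) (s : Fin (n + 1) → ℤ × ℤ),
    Function.Injective s ∧ Set.range s = S ∧
      ∀ k l : Fin (n + 1), adjacentCell (s k) (s l) ↔ ((k : ℕ) + 1 = l ∨ (l : ℕ) + 1 = k)

/-- `MiBSWitness δ lam mu a b` : the π-rotation about the point `(a/2, b/2)`
(which lies on the δ-charge-0 diagonal) exhibits the skew λ/μ as a union of two
rims interchanged by this rotation, with no row of the skew fixed by the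
rotation (the rotation sends row `i` to row `a + 1 - i`). -/
def MiBSWitness (δ : ℤ) (lam mu : ℕ → ℕ) (a b : ℤ) : Prop :=
  b - a = δ - 1 ∧
  (∃ R1 R2 : Set (ℤ × ℤ),
      IsRim R1 ∧ IsRim R2 ∧ skewOf lam mu = R1 ∪ R2 ∧ boxRot a b '' R1 = R2) ∧
  ∀ p ∈ skewOf lam mu, 2 * p.1 ≠ a + 1

/-- λ/μ is a minimal δ-balanced skew. -/
def IsMiBS (δ : ℤ) (lam mu : ℕ → ℕ) : Prop :=
  IsPartition lam ∧ IsPartition mu ∧ cells mu ⊆ cells lam ∧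
    ∃ a b : ℤ, MiBSWitness δ lam mu a b

/-- `μ ←^δ λ` : λ/μ is a minimal δ-balanced skew. -/
def MiBSRel (δ : ℤ) (mu lam : ℕ → ℕ) : Prop := IsMiBS δ lam mu

/-- `μ <^δ λ` : the transitive closure of `←^δ`. -/
def ltDelta (δ : ℤ) : (ℕ → ℕ) → (ℕ → ℕ) → Prop := Relation.TransGen (MiBSRel δ)

/-- `μ ∼^δ λ` : the reflexive-symmetric-transitive closure of `←^δ`
(the block relation). -/
def simDelta (δ : ℤ) : (ℕ → ℕ) → (ℕ → ℕ) → Prop := Relation.EqvGen (MiBSRel δ)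

/-- Remove the last box of row `i`. -/
def removeBox (f : ℕ → ℕ) (i : ℕ) : ℕ → ℕ := fun k => if k = i then f i - 1 else f k

/-- Add a box at the end of row `i`. -/
def addBox (f : ℕ → ℕ) (i : ℕ) : ℕ → ℕ := fun k => if k = i then f i + 1 else f k

/-- The box `e_i` at the end of row `i` of `f` is removable. -/
def Removable (f : ℕ → ℕ) (i : ℕ) : Prop :=
  1 ≤ i ∧ 1 ≤ f i ∧ IsPartition (removeBox f i)

/-- The cell `p` is a removable box of the partition `f`. -/
def RemovableCell (f : ℕ → ℕ) (p : ℤ × ℤ) : Prop :=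
  ∃ i : ℕ, Removable f i ∧ p = ((i : ℤ), (f i : ℤ))

/-- `(ρ_δ)_i = -δ/2 - (i - 1)`. -/
noncomputable def rho (δ : ℤ) (i : ℕ) : ℝ := -(δ : ℝ) / 2 - ((i : ℝ) - 1)

/-- `e_δ(λ) = λ + ρ_δ ∈ ℝ^ℕ`. -/
noncomputable def eDel (δ : ℤ) (f : ℕ → ℕ) : ℕ → ℝ := fun i => (f i : ℝ) + rho δ i

/-- The singularity `s_δ(λ)`: the number of pairs `i < j` of (positive) positions
with `e_δ(λ)_i = -e_δ(λ)_j`. -/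
noncomputable def sing (δ : ℤ) (f : ℕ → ℕ) : ℕ :=
  Set.ncard {q : ℕ × ℕ | 1 ≤ q.1 ∧ q.1 < q.2 ∧ eDel δ f q.1 = -(eDel δ f q.2)}

/-- The boxes of `S` lying in row `i`. -/
def rowCells (S : Set (ℤ × ℤ)) (i : ℤ) : Set (ℤ × ℤ) := {p | p ∈ S ∧ p.1 = i}

/-- Rows `i` and `j` of the skew `S` are matched by the π-rotation about
`(a/2, b/2)`: the rotation maps the skew boxes in row `i` onto those in row `j`. -/
def MatchedRows (a b : ℤ) (S : Set (ℤ × ℤ)) (i j : ℤ) : Prop :=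
  (rowCells S i).Nonempty ∧ boxRot a b '' rowCells S i = rowCells S j

/-- `e_i` is a rim-end removable box of the skew λ/μ: a removable box of λ
contained in the skew, of maximal absolute δ-charge among such boxes. -/
def RimEndBox (δ : ℤ) (lam mu : ℕ → ℕ) (i : ℕ) : Prop :=
  Removable lam i ∧ ((i : ℤ), (lam i : ℤ)) ∈ skewOf lam mu ∧
    ∀ i' : ℕ, Removable lam i' → ((i' : ℤ), (lam i' : ℤ)) ∈ skewOf lam mu →
      |chg δ ((i' : ℤ), (lam i' : ℤ))| ≤ |chg δ ((i : ℤ), (lam i : ℤ))|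

/-- A set of boxes is boxy if every box lies in some 2×2 block of boxes
entirely contained in the set. -/
def Boxy (S : Set (ℤ × ℤ)) : Prop :=
  ∀ p ∈ S, ∃ q : ℤ × ℤ,
    p ∈ ({q, (q.1 + 1, q.2), (q.1, q.2 + 1), (q.1 + 1, q.2 + 1)} : Set (ℤ × ℤ)) ∧
    ({q, (q.1 + 1, q.2), (q.1, q.2 + 1), (q.1 + 1, q.2 + 1)} : Set (ℤ × ℤ)) ⊆ S

/-! ### Sequences, the reflection group 𝒟, and orbits -/

/-- A strongly decreasing sequence (on positive positions): `v_i - v_{i+1} ≥ 1`. -/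
def StronglyDecr (v : ℕ → ℝ) : Prop := ∀ i, 1 ≤ i → v (i + 1) ≤ v i - 1

/-- Entrywise order on sequences (positions indexed from 1). -/
def leSeq (v w : ℕ → ℝ) : Prop := ∀ i, 1 ≤ i → v i ≤ w i

/-- `w'` covers `w` in the entrywise order restricted to `S`. -/
def SeqCovers (S : Set (ℕ → ℝ)) (w w' : ℕ → ℝ) : Prop :=
  leSeq w w' ∧ w ≠ w' ∧ ¬∃ u ∈ S, u ≠ w ∧ u ≠ w' ∧ leSeq w u ∧ leSeq u w'

/-- The map `(ij)` swapping the `i`-th and `j`-th entries of a sequence. -/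
def swapFun (i j : ℕ) (v : ℕ → ℝ) : ℕ → ℝ :=
  fun k => if k = i then v j else if k = j then v i else v k

/-- The map `(ij)_-` replacing the pair of entries `(v_i, v_j)` by `(-v_j, -v_i)`. -/
def negSwapFun (i j : ℕ) (v : ℕ → ℝ) : ℕ → ℝ :=
  fun k => if k = i then -v j else if k = j then -v i else v k

lemma swapFun_involutive (i j : ℕ) : Function.Involutive (swapFun i j) := by
  intro v; funext k; unfold swapFun
  split_ifs <;> simp_all

lemma negSwapFun_involutive (i j : ℕ) : Function.Involutive (negSwapFun i j) := by
  intro v; funext k; unfold negSwapFun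
  split_ifs <;> simp_all

/-- `(ij)` as a bijection of `ℝ^ℕ`. -/
def swapPerm (i j : ℕ) : Equiv.Perm (ℕ → ℝ) :=
  Function.Involutive.toPerm _ (swapFun_involutive i j)

/-- `(ij)_-` as a bijection of `ℝ^ℕ`. -/
def negSwapPerm (i j : ℕ) : Equiv.Perm (ℕ → ℝ) :=
  Function.Involutive.toPerm _ (negSwapFun_involutive i j)

/-- The generators `(ij)`, `(ij)_-` for `1 ≤ i < j`. -/
def Dgens : Set (Equiv.Perm (ℕ → ℝ)) :=
  {g | ∃ i j : ℕ, 1 ≤ i ∧ i < j ∧ (g = swapPerm i j ∨ g = negSwapPerm i j)}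

/-- The group 𝒟 of bijections of `ℝ^ℕ` generated by all `(ij)` and `(ij)_-`. -/
def Dgroup : Subgroup (Equiv.Perm (ℕ → ℝ)) := Subgroup.closure Dgens

/-- `V(v) = 𝒟v ∩ A^+`. -/
def Vset (v : ℕ → ℝ) : Set (ℕ → ℝ) :=
  {w | (∃ g ∈ Dgroup, g v = w) ∧ StronglyDecr w}

/-- Position `i ≥ 1` of `v` belongs to no doubleton. -/
def keptPos (v : ℕ → ℝ) (i : ℕ) : Prop :=
  1 ≤ i ∧ ∀ j, 1 ≤ j → j ≠ i → v j ≠ -v i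

/-- `Reg v`: delete all entries of `v` belonging to doubletons, and re-index
the remaining entries in their original order (positions from 1). -/
noncomputable def Reg (v : ℕ → ℝ) : ℕ → ℝ :=
  fun n => if n = 0 then v 0 else v (Nat.nth (keptPos v) (n - 1))

/-- Insert the value `a` into the sequence `t` after position `i`. -/
def insertAt (t : ℕ → ℝ) (i : ℕ) (a : ℝ) : ℕ → ℝ :=
  fun k => if k ≤ i then t k else if k = i + 1 then a else t (k - 1)

/-- The set of positive naturals occurring as entries of `w`. -/
def Pmap (w : ℕ → ℝ) : Set ℕ := {n | 1 ≤ n ∧ ∃ i, 1 ≤ i ∧ w i = (n : ℝ)}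

/-- The sequence `(v_-)_i = -i`. -/
noncomputable def vminus : ℕ → ℝ := fun i => -(i : ℝ)

open Classical in
/-- The product `w = ∏_{{i,j} ∈ R} (ij)_-` over the matched row pairs of a MiBS
with π-rotation about `(a/2, ·)` (row `i` is matched with row `a + 1 - i`),
acting on a sequence `v`. -/
noncomputable def wAct (a : ℤ) (S : Set (ℤ × ℤ)) (v : ℕ → ℝ) : ℕ → ℝ :=
  fun k => if 1 ≤ k ∧ (∃ p ∈ S, p.1 = (k : ℤ)) then -v (a + 1 - (k : ℤ)).toNat else v k

/-! ### TL-diagrams -/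

/-- Reading `0` (not in `a`) as `+1` and `1` (in `a`) as `-1`:
the depth of the interval `[p, r]`. -/
def tlDepth (a : Finset ℕ) (p r : ℕ) : ℤ :=
  (((Finset.Icc p r).filter (fun i => i ∉ a)).card : ℤ) -
    (((Finset.Icc p r).filter (fun i => i ∈ a)).card : ℤ)

/-- `{p, q}` is a pair formed in the first (bracket-matching) phase of the
construction of `𝒯(a)`. -/
def MatchedPair (a : Finset ℕ) (p q : ℕ) : Prop :=
  1 ≤ p ∧ p < q ∧ p ∉ a ∧ q ∈ a ∧ tlDepth a p q = 0 ∧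
    ∀ r, p ≤ r → r < q → 0 < tlDepth a p r

/-- The `1`-positions left unpaired by the first phase. -/
def leftover (a : Finset ℕ) : Set ℕ := {q | q ∈ a ∧ ¬∃ p, MatchedPair a p q}

/-- All the pair parts of `𝒯(a)`: the matched pairs together with the
consecutive pairing (from the left) of the leftover `1`-positions. -/
noncomputable def TLpairs (a : Finset ℕ) : Set (Set ℕ) :=
  {P | (∃ p q, MatchedPair a p q ∧ P = {p, q}) ∨
       (∃ k : ℕ, 2 * k + 1 < (leftover a).ncard ∧
          P = {Nat.nth (· ∈ leftover a) (2 * k), Nat.nth (· ∈ leftover a) (2 * k + 1)})}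

/-- The parts of the partition `𝒯(a)` of `{1,2,3,…}`: the pair parts, and a
singleton for every other positive position. -/
noncomputable def TLparts (a : Finset ℕ) : Set (Set ℕ) :=
  TLpairs a ∪ {P | ∃ x : ℕ, 1 ≤ x ∧ (∀ Q ∈ TLpairs a, x ∉ Q) ∧ P = {x}}

/-! ### Brauer diagrams -/

/-- `(m,l)`-pair-partitions, encoded as fixed-point-free involutions of
`{1,…,m} ⊔ {1',…,l'}`. -/
def BrDiag (m l : ℕ) : Set ((Fin m ⊕ Fin l) → (Fin m ⊕ Fin l)) :=
  {f | Function.Involutive f ∧ ∀ x, f x ≠ x}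

/-- `Br^l(m,l)`: every primed element lies in a propagating block. -/
def BrProp (m l : ℕ) : Set ((Fin m ⊕ Fin l) → (Fin m ⊕ Fin l)) :=
  {f | f ∈ BrDiag m l ∧ ∀ i : Fin l, ∃ j : Fin m, f (Sum.inr i) = Sum.inl j}

/-- `Br^{l̲}(m,l)`: moreover the propagating blocks are non-crossing. -/
def BrNC (m l : ℕ) : Set ((Fin m ⊕ Fin l) → (Fin m ⊕ Fin l)) :=
  {f | f ∈ BrProp m l ∧ ∀ (i h : Fin l) (j k : Fin m),
      f (Sum.inr i) = Sum.inl j → f (Sum.inr h) = Sum.inl k → i < h → j < k}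

/-- The pair-partition with the same non-propagating blocks as `w`, and with
propagating block `{j, σ(i)'}` for each propagating block `{j, i'}` of `w`. -/
def brMap (m l : ℕ) (w : (Fin m ⊕ Fin l) → (Fin m ⊕ Fin l)) (σ : Equiv.Perm (Fin l)) :
    (Fin m ⊕ Fin l) → (Fin m ⊕ Fin l) :=
  fun x => Sum.map id σ (w (Sum.map id σ.symm x))

namespace Stmt5

open scoped symmDiff

/-! ### Basics on strongly decreasing sequences -/

lemma sd_add {t : ℕ → ℝ} (ht : StronglyDecr t) (i : ℕ) (hi : 1 ≤ i) (k : ℕ) :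
    t (i + k) + k ≤ t i := by
  induction k with
  | zero => simp
  | succ k ih =>
    have h2 := ht (i + k) (le_trans hi (Nat.le_add_right _ _))
    have e : i + (k + 1) = i + k + 1 := rfl
    rw [e]
    push_cast at ih ⊢
    linarith

lemma sd_lt {t : ℕ → ℝ} (ht : StronglyDecr t) {i j : ℕ} (hi : 1 ≤ i) (hij : i < j) :
    t j + 1 ≤ t i := by
  obtain ⟨k, rfl⟩ := Nat.exists_eq_add_of_lt hij
  have h := sd_add ht i hi (k + 1)
  have e : i + (k + 1) = i + k + 1 := rfl
  rw [e] at h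
  push_cast at h
  linarith

lemma sd_anti {t : ℕ → ℝ} (ht : StronglyDecr t) {i j : ℕ} (hi : 1 ≤ i) (hij : i ≤ j) :
    t j ≤ t i := by
  rcases eq_or_lt_of_le hij with rfl | h
  · exact le_refl _
  · linarith [sd_lt ht hi h]

lemma sd_inj {t : ℕ → ℝ} (ht : StronglyDecr t) {i j : ℕ} (hi : 1 ≤ i) (hj : 1 ≤ j)
    (hne : i ≠ j) : t i ≠ t j := by
  rcases hne.lt_or_gt with h | h
  · have := sd_lt ht hi h; intro he; linarith
  · have := sd_lt ht hj h; intro he; linarith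

lemma sd_gap {t : ℕ → ℝ} (ht : StronglyDecr t) {i j : ℕ} (hi : 1 ≤ i) (hj : 1 ≤ j)
    (hne : i ≠ j) : 1 ≤ |t i - t j| := by
  rcases hne.lt_or_gt with h | h
  · have := sd_lt ht hi h
    rw [abs_of_nonneg (by linarith : (0:ℝ) ≤ t i - t j)]; linarith
  · have := sd_lt ht hj h
    rw [abs_of_nonpos (by linarith : t i - t j ≤ 0)]; linarith

lemma sd_tendsto {t : ℕ → ℝ} (ht : StronglyDecr t) (x : ℝ) :
    ∃ N : ℕ, 1 ≤ N ∧ ∀ i, N ≤ i → t i < x := by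
  obtain ⟨n, hn⟩ := exists_nat_gt (t 1 - x + 1)
  refine ⟨n + 1, Nat.le_add_left _ _, fun i hi => ?_⟩
  obtain ⟨k, rfl⟩ := Nat.exists_eq_add_of_le hi
  have h1 := sd_add ht 1 le_rfl (n + k)
  have : (1 : ℕ) + (n + k) = n + 1 + k := by ring
  rw [this] at h1
  push_cast at h1
  linarith

/-! ### Signs attached to a finite flip set -/

noncomputable def sgn (F : Finset ℕ) (k : ℕ) : ℝ := if k ∈ F then -1 else 1

lemma sgn_sq (F : Finset ℕ) (k : ℕ) : sgn F k * sgn F k = 1 := by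
  unfold sgn; split_ifs <;> norm_num

lemma sgn_ne_zero (F : Finset ℕ) (k : ℕ) : sgn F k ≠ 0 := by
  unfold sgn; split_ifs <;> norm_num

lemma sgn_of_mem {F : Finset ℕ} {k : ℕ} (h : k ∈ F) : sgn F k = -1 := if_pos h

lemma sgn_of_not_mem {F : Finset ℕ} {k : ℕ} (h : k ∉ F) : sgn F k = 1 := if_neg h

lemma sgn_symmDiff (F G : Finset ℕ) (k : ℕ) :
    sgn (F ∆ G) k = sgn F k * sgn G k := by
  unfold sgn
  by_cases hF : k ∈ F <;> by_cases hG : k ∈ G <;>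
    simp [Finset.mem_symmDiff, hF, hG]

lemma even_card_symmDiff {F G : Finset ℕ} (hF : Even F.card) (hG : Even G.card) :
    Even (F ∆ G).card := by
  have h1 : (F \ G).card + (F ∩ G).card = F.card := Finset.card_sdiff_add_card_inter F G
  have h2 : (G \ F).card + (G ∩ F).card = G.card := Finset.card_sdiff_add_card_inter G F
  have h3 : (F ∆ G).card = (F \ G).card + (G \ F).card := by
    rw [symmDiff_def, Finset.sup_eq_union, Finset.card_union_of_disjoint]
    exact disjoint_sdiff_sdiff
  have h4 : (F ∩ G).card = (G ∩ F).card := by rw [Finset.inter_comm]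
  rw [Nat.even_iff] at hF hG ⊢
  omega

/-! ### The group 𝒟 consists of finite even signed permutations -/

def DOK (σ : Equiv.Perm ℕ) (F : Finset ℕ) : Prop :=
  σ 0 = 0 ∧ {k | σ k ≠ k}.Finite ∧ (∀ k ∈ F, 1 ≤ k) ∧ Even F.card

def actsAs (g : Equiv.Perm (ℕ → ℝ)) (σ : Equiv.Perm ℕ) (F : Finset ℕ) : Prop :=
  ∀ v k, g v k = sgn F k * v (σ k)

noncomputable def SPgroup : Subgroup (Equiv.Perm (ℕ → ℝ)) where
  carrier := {g | ∃ σ F, DOK σ F ∧ actsAs g σ F}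
  one_mem' := by
    refine ⟨1, ∅, ⟨rfl, by simp, by simp, by simp⟩, fun v k => ?_⟩
    simp [sgn]
  mul_mem' := by
    rintro g h ⟨σ, F, ⟨hσ0, hσfin, hF1, hFe⟩, hg⟩ ⟨τ, G, ⟨hτ0, hτfin, hG1, hGe⟩, hh⟩
    refine ⟨σ.trans τ, F ∆ (G.image σ.symm), ⟨?_, ?_, ?_, ?_⟩, ?_⟩
    · simp [Equiv.trans_apply, hσ0, hτ0]
    · refine Set.Finite.subset (hσfin.union hτfin) ?_
      intro k hk
      simp only [Set.mem_setOf_eq, Equiv.trans_apply] at hk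
      by_contra hc
      simp only [Set.mem_union, Set.mem_setOf_eq, not_or, not_not] at hc
      rw [hc.1, hc.2] at hk; exact hk rfl
    · intro k hk
      rw [Finset.mem_symmDiff] at hk
      rcases hk with ⟨h1, _⟩ | ⟨h1, _⟩
      · exact hF1 k h1
      · simp only [Finset.mem_image] at h1
        obtain ⟨a, ha, rfl⟩ := h1
        rcases Nat.eq_zero_or_pos (σ.symm a) with h0 | h0
        · exfalso
          have : a = 0 := by rw [← σ.apply_symm_apply a, h0, hσ0]
          have := hG1 a ha; omega
        · exact h0
    · exact even_card_symmDiff hFe (by rwa [Finset.card_image_of_injective _ σ.symm.injective])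
    · intro v k
      have h1 : (g * h) v k = g (h v) k := rfl
      rw [h1, hg, hh, sgn_symmDiff]
      have : sgn (G.image σ.symm) k = sgn G (σ k) := by
        unfold sgn
        congr 1
        simp only [eq_iff_iff, Finset.mem_image]
        constructor
        · rintro ⟨a, ha, rfl⟩; rwa [σ.apply_symm_apply]
        · intro h2; exact ⟨σ k, h2, σ.symm_apply_apply k⟩
      rw [this, Equiv.trans_apply]
      ring
  inv_mem' := by
    rintro g ⟨σ, F, ⟨hσ0, hσfin, hF1, hFe⟩, hg⟩
    refine ⟨σ.symm, F.image σ, ⟨?_, ?_, ?_, ?_⟩, ?_⟩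
    · rw [Equiv.symm_apply_eq, hσ0]
    · refine Set.Finite.subset (hσfin.image σ) ?_
      intro k hk
      simp only [Set.mem_setOf_eq] at hk
      have h1 : σ (σ.symm k) = k := σ.apply_symm_apply k
      refine ⟨σ.symm k, ?_, h1⟩
      simp only [Set.mem_setOf_eq]
      intro hc
      exact hk ((h1.symm.trans hc).symm)
    · intro k hk
      simp only [Finset.mem_image] at hk
      obtain ⟨a, ha, rfl⟩ := hk
      rcases Nat.eq_zero_or_pos (σ a) with h0 | h0
      · exfalso
        have : a = 0 := σ.injective (by rw [h0, hσ0])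
        have := hF1 a ha; omega
      · exact h0
    · rwa [Finset.card_image_of_injective _ σ.injective]
    · intro v k
      have key : ∀ w, g w = v → w k = sgn F (σ.symm k) * v (σ.symm k) := by
        intro w hw
        have h1 : v (σ.symm k) = sgn F (σ.symm k) * w (σ (σ.symm k)) := by
          rw [← hw]; exact hg w (σ.symm k)
        rw [σ.apply_symm_apply] at h1
        have := sgn_sq F (σ.symm k)
        calc w k = sgn F (σ.symm k) * sgn F (σ.symm k) * w k := by rw [this]; ring
          _ = sgn F (σ.symm k) * v (σ.symm k) := by rw [mul_assoc, ← h1]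
      have h2 : g (g⁻¹ v) = v := by
        have : g (g⁻¹ v) = (g * g⁻¹) v := rfl
        rw [this, mul_inv_cancel]; rfl
      rw [key _ h2]
      have : sgn (F.image σ) k = sgn F (σ.symm k) := by
        unfold sgn
        congr 1
        simp only [eq_iff_iff, Finset.mem_image]
        constructor
        · rintro ⟨a, ha, rfl⟩; rwa [σ.symm_apply_apply]
        · intro h2; exact ⟨σ.symm k, h2, σ.apply_symm_apply k⟩
      rw [this]

/-! ### Evaluation lemmas for the generators -/

lemma swapPerm_eval (i j : ℕ) (v : ℕ → ℝ) (k : ℕ) :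
    swapPerm i j v k = v (Equiv.swap i j k) := by
  show swapFun i j v k = _
  rw [Equiv.swap_apply_def]
  unfold swapFun
  split_ifs <;> rfl

lemma negSwapPerm_eval (i j : ℕ) (v : ℕ → ℝ) (k : ℕ) :
    negSwapPerm i j v k = sgn {i, j} k * v (Equiv.swap i j k) := by
  show negSwapFun i j v k = _
  rw [Equiv.swap_apply_def]
  unfold negSwapFun sgn
  by_cases h1 : k = i <;> by_cases h2 : k = j <;>
    simp [h1, h2] <;> (first | ring1 | (split_ifs <;> simp_all))

lemma swapPerm_comm (i j : ℕ) : swapPerm i j = swapPerm j i := by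
  refine Equiv.ext fun v => funext fun k => ?_
  show swapFun i j v k = swapFun j i v k
  unfold swapFun
  split_ifs <;> simp_all

lemma negSwapPerm_comm (i j : ℕ) : negSwapPerm i j = negSwapPerm j i := by
  refine Equiv.ext fun v => funext fun k => ?_
  show negSwapFun i j v k = negSwapFun j i v k
  unfold negSwapFun
  split_ifs <;> simp_all

lemma swapPerm_mem {i j : ℕ} (hi : 1 ≤ i) (hj : 1 ≤ j) (hij : i ≠ j) :
    swapPerm i j ∈ Dgroup := by
  rcases hij.lt_or_gt with h | h
  · exact Subgroup.subset_closure ⟨i, j, hi, h, Or.inl rfl⟩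
  · rw [swapPerm_comm]
    exact Subgroup.subset_closure ⟨j, i, hj, h, Or.inl rfl⟩

lemma negSwapPerm_mem {i j : ℕ} (hi : 1 ≤ i) (hj : 1 ≤ j) (hij : i ≠ j) :
    negSwapPerm i j ∈ Dgroup := by
  rcases hij.lt_or_gt with h | h
  · exact Subgroup.subset_closure ⟨i, j, hi, h, Or.inr rfl⟩
  · rw [negSwapPerm_comm]
    exact Subgroup.subset_closure ⟨j, i, hj, h, Or.inr rfl⟩

/-! ### 𝒟 is contained in the signed permutations -/

lemma dgroup_le_sp : Dgroup ≤ SPgroup := by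
  rw [Dgroup]
  refine (Subgroup.closure_le _).2 ?_
  rintro g ⟨i, j, hi, hij, (rfl | rfl)⟩
  · refine ⟨Equiv.swap i j, ∅, ⟨?_, ?_, by simp, by simp⟩, fun v k => ?_⟩
    · exact Equiv.swap_apply_of_ne_of_ne (by omega) (by omega)
    · refine Set.Finite.subset ((Set.finite_singleton j).insert i) ?_
      intro k hk
      simp only [Set.mem_setOf_eq] at hk
      by_contra hc
      simp only [Set.mem_insert_iff, Set.mem_singleton_iff, not_or] at hc
      exact hk (Equiv.swap_apply_of_ne_of_ne hc.1 hc.2)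
    · rw [swapPerm_eval, sgn_of_not_mem (Finset.notMem_empty k), one_mul]
  · refine ⟨Equiv.swap i j, {i, j}, ⟨?_, ?_, ?_, ?_⟩, fun v k => ?_⟩
    · exact Equiv.swap_apply_of_ne_of_ne (by omega) (by omega)
    · refine Set.Finite.subset ((Set.finite_singleton j).insert i) ?_
      intro k hk
      simp only [Set.mem_setOf_eq] at hk
      by_contra hc
      simp only [Set.mem_insert_iff, Set.mem_singleton_iff, not_or] at hc
      exact hk (Equiv.swap_apply_of_ne_of_ne hc.1 hc.2)
    · intro k hk
      simp only [Finset.mem_insert, Finset.mem_singleton] at hk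
      rcases hk with rfl | rfl <;> omega
    · rw [Finset.card_pair (by omega)]
      exact ⟨1, rfl⟩
    · exact negSwapPerm_eval i j v k

lemma orbit_SP {v t : ℕ → ℝ} (h : ∃ g ∈ Dgroup, g v = t) :
    ∃ (σ : Equiv.Perm ℕ) (F : Finset ℕ), DOK σ F ∧ ∀ k, t k = sgn F k * v (σ k) := by
  obtain ⟨g, hg, rfl⟩ := h
  obtain ⟨σ, F, hok, hacts⟩ := dgroup_le_sp hg
  exact ⟨σ, F, hok, fun k => hacts v k⟩

/-! ### Every finite even signed permutation lies in 𝒟 -/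

lemma flips_mem : ∀ n (F : Finset ℕ), F.card = n → (∀ k ∈ F, 1 ≤ k) → Even F.card →
    ∃ g ∈ Dgroup, ∀ w k, g w k = sgn F k * w k := by
  intro n
  induction n using Nat.strong_induction_on with
  | _ n ih =>
    intro F hcard hF1 hFe
    rcases Finset.eq_empty_or_nonempty F with rfl | ⟨i, hi⟩
    · exact ⟨1, one_mem _, fun w k => by simp [sgn]⟩
    have hpos : 0 < F.card := Finset.card_pos.2 ⟨i, hi⟩
    have hc2 : 2 ≤ F.card := by
      rw [Nat.even_iff] at hFe; omega
    have : 0 < (F.erase i).card := by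
      rw [Finset.card_erase_of_mem hi]; omega
    obtain ⟨j, hj⟩ := Finset.card_pos.1 this
    have hji : j ≠ i := (Finset.mem_erase.1 hj).1
    have hjF : j ∈ F := (Finset.mem_erase.1 hj).2
    set F' := (F.erase i).erase j with hF'
    have hiF' : i ∉ F' := by simp [hF', Finset.mem_erase]
    have hjF' : j ∉ F' := by simp [hF', Finset.mem_erase]
    have hmem : ∀ k, k ∈ F ↔ (k ∈ F' ∨ k = i ∨ k = j) := by
      intro k
      simp only [hF', Finset.mem_erase]
      constructor
      · intro hk
        by_cases h1 : k = i
        · tauto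
        · by_cases h2 : k = j <;> tauto
      · rintro (⟨h1, h2, h3⟩ | rfl | rfl) <;> assumption
    have hcard' : F'.card = n - 2 := by
      rw [hF', Finset.card_erase_of_mem hj, Finset.card_erase_of_mem hi, hcard]
      omega
    have hF'1 : ∀ k ∈ F', 1 ≤ k := fun k hk => hF1 k ((hmem k).2 (Or.inl hk))
    have hF'e : Even F'.card := by
      rw [hcard']
      rw [Nat.even_iff] at hFe ⊢
      rw [hcard] at hFe
      omega
    obtain ⟨g', hg'D, hg'⟩ := ih (n - 2) (by omega) F' hcard' hF'1 (hcard' ▸ hF'e)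
    have hi1 : 1 ≤ i := hF1 i hi
    have hj1 : 1 ≤ j := hF1 j hjF
    refine ⟨g' * (negSwapPerm i j * swapPerm i j),
      mul_mem hg'D (mul_mem (negSwapPerm_mem hi1 hj1 (Ne.symm hji)) (swapPerm_mem hi1 hj1 (Ne.symm hji))), ?_⟩
    intro w k
    have h1 : (g' * (negSwapPerm i j * swapPerm i j)) w k
        = g' ((negSwapPerm i j * swapPerm i j) w) k := rfl
    have h2 : (negSwapPerm i j * swapPerm i j) w = fun k => sgn {i, j} k * w k := by
      funext k
      have : (negSwapPerm i j * swapPerm i j) w k = negSwapPerm i j (swapPerm i j w) k := rfl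
      rw [this, negSwapPerm_eval, swapPerm_eval, Equiv.swap_apply_self]
    rw [h1, h2, hg']
    show sgn F' k * (sgn {i, j} k * w k) = sgn F k * w k
    have hsgn : sgn F k = sgn F' k * sgn {i, j} k := by
      by_cases h3 : k ∈ F'
      · have hk : k ∈ F := (hmem k).2 (Or.inl h3)
        have : k ∉ ({i, j} : Finset ℕ) := by
          simp only [Finset.mem_insert, Finset.mem_singleton]
          rintro (rfl | rfl) <;> [exact hiF' h3; exact hjF' h3]
        rw [sgn_of_mem hk, sgn_of_mem h3, sgn_of_not_mem this]; ring
      · by_cases h4 : k = i ∨ k = j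
        · have hk : k ∈ F := (hmem k).2 (Or.inr h4)
          have : k ∈ ({i, j} : Finset ℕ) := by
            simp only [Finset.mem_insert, Finset.mem_singleton]; exact h4
          rw [sgn_of_mem hk, sgn_of_not_mem h3, sgn_of_mem this]; ring
        · have hk : k ∉ F := fun hc => by have := (hmem k).1 hc; tauto
          rw [sgn_of_not_mem hk, sgn_of_not_mem h3, sgn_of_not_mem (by
            simp only [Finset.mem_insert, Finset.mem_singleton]; exact h4)]
          ring
    rw [hsgn]; ring

lemma signed_perm_mem (F : Finset ℕ) (hF1 : ∀ k ∈ F, 1 ≤ k) (hFe : Even F.card)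
    (σ : Equiv.Perm ℕ) (hσ0 : σ 0 = 0) (hσfin : {k | σ k ≠ k}.Finite) :
    ∃ g ∈ Dgroup, ∀ w k, g w k = sgn F k * w (σ k) := by
  suffices H : ∀ n (σ : Equiv.Perm ℕ), σ 0 = 0 → ∀ hfin : {k | σ k ≠ k}.Finite,
      hfin.toFinset.card = n →
      ∃ g ∈ Dgroup, ∀ w k, g w k = sgn F k * w (σ k) from
    H _ σ hσ0 hσfin rfl
  intro n
  induction n using Nat.strong_induction_on with
  | _ n ih =>
    intro σ hσ0 hfin hcard
    by_cases hid : ∀ k, σ k = k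
    · obtain ⟨g, hgD, hg⟩ := flips_mem F.card F rfl hF1 hFe
      exact ⟨g, hgD, fun w k => by rw [hg, hid k]⟩
    push_neg at hid
    obtain ⟨i, hi⟩ := hid
    set j := σ i with hj
    have hi0 : i ≠ 0 := by rintro rfl; exact hi hσ0
    have hj0 : j ≠ 0 := fun hc => hi0 (σ.injective (hc.trans hσ0.symm))
    have hji : j ≠ i := hi
    set σ' : Equiv.Perm ℕ := σ.trans (Equiv.swap i j) with hσ'
    have hσ'app : ∀ k, σ' k = Equiv.swap i j (σ k) := fun k => rfl
    have hσ'0 : σ' 0 = 0 := by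
      rw [hσ'app, hσ0]
      exact Equiv.swap_apply_of_ne_of_ne (Ne.symm hi0) (Ne.symm hj0)
    have hσ'i : σ' i = i := by
      rw [hσ'app, ← hj, Equiv.swap_apply_right]
    have hsub : {k | σ' k ≠ k} ⊆ {k | σ k ≠ k} := by
      intro k hk
      simp only [Set.mem_setOf_eq] at hk ⊢
      intro hc
      apply hk
      rw [hσ'app, hc]
      rcases eq_or_ne k i with rfl | hki
      · exact absurd hc hi
      rcases eq_or_ne k j with rfl | hkj
      · exact absurd (σ.injective (hc.trans hj)) hji
      exact Equiv.swap_apply_of_ne_of_ne hki hkj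
    have hfin' : {k | σ' k ≠ k}.Finite := hfin.subset hsub
    have hiin : i ∈ hfin.toFinset := by
      rw [Set.Finite.mem_toFinset]; exact hi
    have hsub2 : hfin'.toFinset ⊆ hfin.toFinset.erase i := by
      intro k hk
      rw [Set.Finite.mem_toFinset] at hk
      rw [Finset.mem_erase, Set.Finite.mem_toFinset]
      refine ⟨fun hc => ?_, hsub hk⟩
      subst hc
      exact hk hσ'i
    have hlt : hfin'.toFinset.card < n := by
      calc hfin'.toFinset.card ≤ (hfin.toFinset.erase i).card := Finset.card_le_card hsub2
        _ < hfin.toFinset.card := Finset.card_erase_lt_of_mem hiin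
        _ = n := hcard
    obtain ⟨g', hg'D, hg'⟩ := ih _ hlt σ' hσ'0 hfin' rfl
    refine ⟨g' * swapPerm i j,
      mul_mem hg'D (swapPerm_mem (Nat.one_le_iff_ne_zero.2 hi0) (Nat.one_le_iff_ne_zero.2 hj0)
        (Ne.symm hji)), ?_⟩
    intro w k
    have h1 : (g' * swapPerm i j) w k = g' (swapPerm i j w) k := rfl
    rw [h1, hg']
    congr 1
    rw [swapPerm_eval, hσ'app, Equiv.swap_apply_self]

/-! ### Doubletons of strongly decreasing sequences -/

def dblPos (t : ℕ → ℝ) (i : ℕ) : Prop := 1 ≤ i ∧ ∃ j, 1 ≤ j ∧ j ≠ i ∧ t j = -t i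

/-- The set of doubleton entries. -/
def Dset (t : ℕ → ℝ) : Set ℝ := {x | ∃ i, dblPos t i ∧ t i = x}

lemma keptPos_iff (t : ℕ → ℝ) (i : ℕ) : keptPos t i ↔ 1 ≤ i ∧ ¬ dblPos t i := by
  unfold keptPos dblPos
  constructor
  · rintro ⟨h1, h2⟩
    exact ⟨h1, fun ⟨_, j, hj1, hj2, hj3⟩ => h2 j hj1 hj2 hj3⟩
  · rintro ⟨h1, h2⟩
    refine ⟨h1, fun j hj1 hj2 hj3 => h2 ⟨h1, j, hj1, hj2, hj3⟩⟩

lemma dblPos_of_not_kept {t : ℕ → ℝ} {i : ℕ} (hi : 1 ≤ i) (h : ¬ keptPos t i) :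
    dblPos t i := by
  rw [keptPos_iff] at h; tauto

lemma sd_bound {t : ℕ → ℝ} (ht : StronglyDecr t) {i : ℕ} (hi : 1 ≤ i) :
    t i + ((i : ℝ) - 1) ≤ t 1 := by
  have h := sd_add ht 1 le_rfl (i - 1)
  have e : 1 + (i - 1) = i := by omega
  rw [e] at h
  have : ((i - 1 : ℕ) : ℝ) = (i : ℝ) - 1 := by
    have : (1 : ℕ) ≤ i := hi
    push_cast [Nat.cast_sub this]
    ring
  linarith [this ▸ h]

lemma dblPos_finite {t : ℕ → ℝ} (ht : StronglyDecr t) : {i | dblPos t i}.Finite := by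
  obtain ⟨n, hn⟩ := exists_nat_ge (2 * t 1 + 1)
  refine Set.Finite.subset (Set.finite_Iic n) ?_
  rintro i ⟨hi1, j, hj1, _, hj3⟩
  simp only [Set.mem_Iic]
  have h1 := sd_bound ht hi1
  have h2 := sd_bound ht hj1
  have : (i : ℝ) ≤ 2 * t 1 + 1 := by
    have hj0 : (1 : ℝ) ≤ (j : ℝ) := by exact_mod_cast hj1
    nlinarith [hj3]
  have : (i : ℝ) ≤ (n : ℝ) := le_trans this hn
  exact_mod_cast this

lemma kept_infinite {t : ℕ → ℝ} (ht : StronglyDecr t) : (setOf (keptPos t)).Infinite := by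
  have h1 : (Set.Ici 1 : Set ℕ).Infinite := Set.Ici_infinite 1
  refine Set.Infinite.mono ?_ (h1.diff (dblPos_finite ht))
  rintro i ⟨hi1, hi2⟩
  rw [show (i ∈ setOf (keptPos t)) = keptPos t i from rfl, keptPos_iff]
  exact ⟨hi1, hi2⟩

open Classical in
noncomputable def partner (t : ℕ → ℝ) (i : ℕ) : ℕ :=
  if h : ∃ j, 1 ≤ j ∧ j ≠ i ∧ t j = -t i then h.choose else 0

lemma partner_spec {t : ℕ → ℝ} {i : ℕ} (h : dblPos t i) :
    1 ≤ partner t i ∧ partner t i ≠ i ∧ t (partner t i) = -t i := by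
  obtain ⟨hi1, hex⟩ := h
  unfold partner
  rw [dif_pos hex]
  exact hex.choose_spec

lemma partner_dbl {t : ℕ → ℝ} {i : ℕ} (h : dblPos t i) : dblPos t (partner t i) := by
  obtain ⟨hp1, hp2, hp3⟩ := partner_spec h
  exact ⟨hp1, i, h.1, fun hc => hp2 hc.symm, by rw [hp3]; ring⟩

lemma partner_invol {t : ℕ → ℝ} (ht : StronglyDecr t) {i : ℕ} (h : dblPos t i) :
    partner t (partner t i) = i := by
  obtain ⟨hp1, hp2, hp3⟩ := partner_spec h
  obtain ⟨hq1, hq2, hq3⟩ := partner_spec (partner_dbl h)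
  rw [hp3] at hq3
  have : t (partner t (partner t i)) = t i := by rw [hq3]; ring
  by_contra hc
  exact sd_inj ht hq1 h.1 hc this

lemma Dset_neg {t : ℕ → ℝ} {x : ℝ} (h : x ∈ Dset t) : -x ∈ Dset t := by
  obtain ⟨i, hi, rfl⟩ := h
  obtain ⟨hp1, hp2, hp3⟩ := partner_spec hi
  exact ⟨partner t i, partner_dbl hi, hp3⟩

lemma sgn_cases (F : Finset ℕ) (k : ℕ) : sgn F k = 1 ∨ sgn F k = -1 := by
  unfold sgn; split_ifs <;> simp

/-! ### Transport of doubletons along a signed permutation -/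

section Transport

variable {v t : ℕ → ℝ} {σ : Equiv.Perm ℕ} {F : Finset ℕ}

lemma sp_pos (hok : DOK σ F) {k : ℕ} (hk : 1 ≤ k) : 1 ≤ σ k := by
  rcases Nat.eq_zero_or_pos (σ k) with h0 | h0
  · have : k = 0 := σ.injective (by rw [h0, hok.1])
    omega
  · exact h0

lemma sp_pos_symm (hok : DOK σ F) {k : ℕ} (hk : 1 ≤ k) : 1 ≤ σ.symm k := by
  rcases Nat.eq_zero_or_pos (σ.symm k) with h0 | h0
  · have : σ (σ.symm k) = k := σ.apply_symm_apply k
    rw [h0, hok.1] at this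
    omega
  · exact h0

lemma sp_dbl_iff (hv : StronglyDecr v) (htd : StronglyDecr t) (hok : DOK σ F)
    (ht : ∀ k, t k = sgn F k * v (σ k)) {k : ℕ} (hk : 1 ≤ k) :
    dblPos t k ↔ dblPos v (σ k) := by
  constructor
  · rintro ⟨_, j, hj1, hj2, hj3⟩
    have hσj : 1 ≤ σ j := sp_pos hok hj1
    have hσk : 1 ≤ σ k := sp_pos hok hk
    have hσne : σ j ≠ σ k := fun hc => hj2 (σ.injective hc)
    refine ⟨hσk, σ j, hσj, hσne, ?_⟩
    have e1 : v (σ j) = sgn F j * t j := by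
      rw [ht j, ← mul_assoc, sgn_sq, one_mul]
    have e2 : v (σ k) = sgn F k * t k := by
      rw [ht k, ← mul_assoc, sgn_sq, one_mul]
    have key : v (σ j) = v (σ k) ∨ v (σ j) = -v (σ k) := by
      rcases sgn_cases F j with h1 | h1 <;> rcases sgn_cases F k with h2 | h2 <;>
        rw [h1] at e1 <;> rw [h2] at e2 <;> [right; left; left; right] <;>
        rw [e1, e2, hj3] <;> ring
    rcases key with h | h
    · exact absurd h (sd_inj hv hσj hσk hσne)
    · exact h
  · rintro ⟨hσk1, m, hm1, hm2, hm3⟩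
    have hj1 : 1 ≤ σ.symm m := sp_pos_symm hok hm1
    have hj2 : σ.symm m ≠ k := by
      intro hc
      apply hm2
      rw [← hc, σ.apply_symm_apply]
    refine ⟨hk, σ.symm m, hj1, hj2, ?_⟩
    have e1 : t (σ.symm m) = sgn F (σ.symm m) * v m := by
      rw [ht (σ.symm m), σ.apply_symm_apply]
    have e2 := ht k
    have key : t (σ.symm m) = t k ∨ t (σ.symm m) = -t k := by
      rcases sgn_cases F (σ.symm m) with h1 | h1 <;> rcases sgn_cases F k with h2 | h2 <;>
        rw [h1] at e1 <;> rw [h2] at e2 <;> [right; left; left; right] <;>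
        rw [e1, e2, hm3] <;> ring
    rcases key with h | h
    · exact absurd h (sd_inj htd hj1 hk hj2)
    · exact h

lemma sp_kept_iff (hv : StronglyDecr v) (htd : StronglyDecr t) (hok : DOK σ F)
    (ht : ∀ k, t k = sgn F k * v (σ k)) {k : ℕ} (hk : 1 ≤ k) :
    keptPos t k ↔ keptPos v (σ k) := by
  rw [keptPos_iff, keptPos_iff, sp_dbl_iff hv htd hok ht hk]
  have := sp_pos hok hk
  tauto

lemma sp_Dset_sub (hv : StronglyDecr v) (htd : StronglyDecr t) (hok : DOK σ F)
    (ht : ∀ k, t k = sgn F k * v (σ k)) : Dset t ⊆ Dset v := by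
  rintro x ⟨i, hi, rfl⟩
  have hd : dblPos v (σ i) := (sp_dbl_iff hv htd hok ht hi.1).1 hi
  rcases sgn_cases F i with h1 | h1
  · exact ⟨σ i, hd, by rw [ht i, h1, one_mul]⟩
  · have : v (σ i) = -t i := by rw [ht i, h1]; ring
    have hmem : -t i ∈ Dset v := ⟨σ i, hd, this⟩
    have := Dset_neg hmem
    rwa [neg_neg] at this

end Transport

/-! ### Orbit-level transport -/

lemma orbit_symm {v t : ℕ → ℝ} (h : ∃ g ∈ Dgroup, g v = t) : ∃ g ∈ Dgroup, g t = v := by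
  obtain ⟨g, hg, rfl⟩ := h
  exact ⟨g⁻¹, inv_mem hg, g.symm_apply_apply v⟩

lemma orbit_Dset {v t : ℕ → ℝ} (hv : StronglyDecr v) (htd : StronglyDecr t)
    (horb : ∃ g ∈ Dgroup, g v = t) : Dset t = Dset v := by
  obtain ⟨σ, F, hok, ht⟩ := orbit_SP horb
  obtain ⟨σ', F', hok', htv⟩ := orbit_SP (orbit_symm horb)
  exact le_antisymm (sp_Dset_sub hv htd hok ht) (sp_Dset_sub htd hv hok' htv)

/-! ### Parity via involutions -/

lemma even_of_involution : ∀ (n : ℕ) (s : Finset ℕ), s.card = n → ∀ f : ℕ → ℕ,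
    (∀ x ∈ s, f x ∈ s) → (∀ x ∈ s, f (f x) = x) → (∀ x ∈ s, f x ≠ x) → Even s.card := by
  intro n
  induction n using Nat.strong_induction_on with
  | _ n ih =>
    intro s hcard f hmaps hinv hne
    rcases Finset.eq_empty_or_nonempty s with rfl | ⟨x, hx⟩
    · simp
    set s' := (s.erase x).erase (f x) with hs'
    have hfx : f x ∈ s := hmaps x hx
    have hfxx : f x ≠ x := hne x hx
    have hmem' : ∀ y, y ∈ s' ↔ (y ∈ s ∧ y ≠ x ∧ y ≠ f x) := by
      intro y
      simp only [hs', Finset.mem_erase]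
      tauto
    have hcard' : s'.card = n - 2 := by
      rw [hs', Finset.card_erase_of_mem (by rw [Finset.mem_erase]; exact ⟨hfxx, hfx⟩),
        Finset.card_erase_of_mem hx, hcard]
      omega
    have hn2 : 2 ≤ n := by
      have h1 : 0 < s.card := Finset.card_pos.2 ⟨x, hx⟩
      have : ({x, f x} : Finset ℕ) ⊆ s := by
        intro y hy
        simp only [Finset.mem_insert, Finset.mem_singleton] at hy
        rcases hy with rfl | rfl <;> assumption
      have := Finset.card_le_card this
      rw [Finset.card_pair (Ne.symm hfxx), hcard] at this
      exact this
    have hmaps' : ∀ y ∈ s', f y ∈ s' := by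
      intro y hy
      rw [hmem'] at hy ⊢
      obtain ⟨hys, hyx, hyfx⟩ := hy
      refine ⟨hmaps y hys, ?_, ?_⟩
      · intro hc
        apply hyfx
        rw [← hinv y hys, hc]  -- y = f (f y) = f x
      · intro hc
        apply hyx
        have := hinv y hys
        rw [hc, hinv x hx] at this
        exact this.symm
    have hinv' : ∀ y ∈ s', f (f y) = y := fun y hy => hinv y ((hmem' y).1 hy).1
    have hne' : ∀ y ∈ s', f y ≠ y := fun y hy => hne y ((hmem' y).1 hy).1
    have := ih (n - 2) (by omega) s' hcard' f hmaps' hinv' hne'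
    rw [hcard', Nat.even_iff] at this
    rw [hcard, Nat.even_iff]
    omega

section Parity

variable {v t : ℕ → ℝ} {σ : Equiv.Perm ℕ} {F : Finset ℕ}

lemma mem_iff_sgn (F : Finset ℕ) (k : ℕ) : k ∈ F ↔ sgn F k = -1 := by
  unfold sgn
  split_ifs with h <;> simp [h]
  norm_num

lemma sp_flip_partner (hv : StronglyDecr v) (htd : StronglyDecr t) (hok : DOK σ F)
    (ht : ∀ k, t k = sgn F k * v (σ k)) {k : ℕ} (hd : dblPos t k) :
    (k ∈ F ↔ partner t k ∈ F) := by
  obtain ⟨hp1, hp2, hp3⟩ := partner_spec hd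
  set p := partner t k with hp
  have hk1 : 1 ≤ k := hd.1
  have hσp : 1 ≤ σ p := sp_pos hok hp1
  have hσk : 1 ≤ σ k := sp_pos hok hk1
  have hσne : σ p ≠ σ k := fun hc => hp2 (σ.injective hc)
  have hvne : v (σ p) ≠ v (σ k) := sd_inj hv hσp hσk hσne
  have e1 : v (σ p) = sgn F p * t p := by rw [ht p, ← mul_assoc, sgn_sq, one_mul]
  have e2 : v (σ k) = sgn F k * t k := by rw [ht k, ← mul_assoc, sgn_sq, one_mul]
  by_cases hkF : k ∈ F <;> by_cases hpF : p ∈ F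
  · simp [hkF, hpF]
  · exfalso
    apply hvne
    rw [e1, e2, sgn_of_not_mem hpF, sgn_of_mem hkF, hp3]
    ring
  · exfalso
    apply hvne
    rw [e1, e2, sgn_of_mem hpF, sgn_of_not_mem hkF, hp3]
    ring
  · simp [hkF, hpF]

open Classical in
lemma flips_kept_even (hv : StronglyDecr v) (htd : StronglyDecr t) (hok : DOK σ F)
    (ht : ∀ k, t k = sgn F k * v (σ k)) :
    Even ((F.filter (fun k => keptPos t k)).card) := by
  have hF1 := hok.2.2.1
  have hFe := hok.2.2.2
  set s := F.filter (fun k => ¬ keptPos t k) with hs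
  have hdbl : ∀ k ∈ s, dblPos t k := by
    intro k hk
    rw [hs, Finset.mem_filter] at hk
    exact dblPos_of_not_kept (hF1 k hk.1) hk.2
  have hseven : Even s.card := by
    refine even_of_involution s.card s rfl (partner t) ?_ ?_ ?_
    · intro x hx
      have hd := hdbl x hx
      rw [hs, Finset.mem_filter] at hx ⊢
      refine ⟨(sp_flip_partner hv htd hok ht hd).1 hx.1, ?_⟩
      rw [keptPos_iff]
      push_neg
      intro _
      exact partner_dbl hd
    · intro x hx
      exact partner_invol htd (hdbl x hx)
    · intro x hx
      exact (partner_spec (hdbl x hx)).2.1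
  have hsplit : (F.filter (fun k => keptPos t k)).card + s.card = F.card := by
    rw [hs]
    exact Finset.card_filter_add_card_filter_not _
  rw [Nat.even_iff] at hseven hFe ⊢
  omega

end Parity

/-! ### Counting entries above a level -/

noncomputable def NA (t : ℕ → ℝ) (x : ℝ) : ℕ := Set.ncard {p | 1 ≤ p ∧ x ≤ t p}

lemma NA_fin {t : ℕ → ℝ} (htd : StronglyDecr t) (x : ℝ) :
    {p | 1 ≤ p ∧ x ≤ t p}.Finite := by
  obtain ⟨N, hN1, hN⟩ := sd_tendsto htd x
  refine Set.Finite.subset (Set.finite_Iio N) ?_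
  rintro p ⟨hp1, hp2⟩
  simp only [Set.mem_Iio]
  by_contra hc
  push_neg at hc
  exact absurd hp2 (not_le.2 (hN p hc))

lemma leSeq_iff_NA {t u : ℕ → ℝ} (htd : StronglyDecr t) (hud : StronglyDecr u) :
    leSeq t u ↔ ∀ x, NA t x ≤ NA u x := by
  constructor
  · intro h x
    refine Set.ncard_le_ncard ?_ (NA_fin hud x)
    rintro p ⟨hp1, hp2⟩
    exact ⟨hp1, le_trans hp2 (h p hp1)⟩
  · intro h k hk
    by_contra hc
    push_neg at hc
    have h1 : Set.Icc 1 k ⊆ {p | 1 ≤ p ∧ t k ≤ t p} := by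
      rintro p ⟨hp1, hp2⟩
      exact ⟨hp1, sd_anti htd hp1 hp2⟩
    have h2 : {p | 1 ≤ p ∧ t k ≤ u p} ⊆ Set.Icc 1 (k - 1) := by
      rintro p ⟨hp1, hp2⟩
      refine ⟨hp1, ?_⟩
      by_contra hpc
      push_neg at hpc
      have hkp : k ≤ p := by omega
      have : u p ≤ u k := sd_anti hud hk hkp
      linarith
    have hicc : ∀ a b : ℕ, (Set.Icc a b).ncard = b + 1 - a := by
      intro a b
      rw [← Finset.coe_Icc, Set.ncard_coe_finset, Nat.card_Icc]
    have c1 : k ≤ NA t (t k) := by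
      have := Set.ncard_le_ncard h1 (NA_fin htd (t k))
      rw [hicc] at this
      unfold NA
      omega
    have c2 : NA u (t k) ≤ k - 1 := by
      have := Set.ncard_le_ncard h2 (Set.finite_Icc 1 (k - 1))
      rw [hicc] at this
      unfold NA
      omega
    have := h (t k)
    omega

/-! ### Basic properties of Reg -/

lemma Reg_zero (t : ℕ → ℝ) : Reg t 0 = t 0 := by unfold Reg; simp

lemma Reg_eval (t : ℕ → ℝ) {n : ℕ} (hn : 1 ≤ n) :
    Reg t n = t (Nat.nth (keptPos t) (n - 1)) := by
  unfold Reg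
  rw [if_neg (by omega)]

lemma nth_kept_mem {t : ℕ → ℝ} (htd : StronglyDecr t) (n : ℕ) :
    keptPos t (Nat.nth (keptPos t) n) :=
  Nat.nth_mem_of_infinite (kept_infinite htd) n

lemma nth_kept_lt {t : ℕ → ℝ} (htd : StronglyDecr t) {m n : ℕ} (h : m < n) :
    Nat.nth (keptPos t) m < Nat.nth (keptPos t) n :=
  (Nat.nth_lt_nth (kept_infinite htd)).2 h

lemma Reg_sd {t : ℕ → ℝ} (htd : StronglyDecr t) : StronglyDecr (Reg t) := by
  intro n hn
  rw [Reg_eval t hn, Reg_eval t (by omega : 1 ≤ n + 1)]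
  have e : n + 1 - 1 = n := by omega
  rw [e]
  have hlt : Nat.nth (keptPos t) (n - 1) < Nat.nth (keptPos t) n :=
    nth_kept_lt htd (by omega)
  have h1 : 1 ≤ Nat.nth (keptPos t) (n - 1) := (nth_kept_mem htd (n - 1)).1
  linarith [sd_lt htd h1 hlt]

lemma Reg_entries {t : ℕ → ℝ} (htd : StronglyDecr t) :
    {x | ∃ n, 1 ≤ n ∧ Reg t n = x} = {x | ∃ i, keptPos t i ∧ t i = x} := by
  ext x
  constructor
  · rintro ⟨n, hn, rfl⟩
    rw [Reg_eval t hn]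
    exact ⟨_, nth_kept_mem htd _, rfl⟩
  · rintro ⟨i, hi, rfl⟩
    classical
    refine ⟨Nat.count (keptPos t) i + 1, by omega, ?_⟩
    rw [Reg_eval t (by omega), Nat.add_sub_cancel, Nat.nth_count hi]

/-! ### Counting decomposition -/

lemma NA_split {t : ℕ → ℝ} (htd : StronglyDecr t) (x : ℝ) :
    NA t x = NA (Reg t) x + (Dset t ∩ Set.Ici x).ncard := by
  classical
  set A := {p | 1 ≤ p ∧ x ≤ t p} with hA
  set Ak := {p | keptPos t p ∧ x ≤ t p} with hAk
  set Ad := {p | dblPos t p ∧ x ≤ t p} with hAd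
  have hAfin : A.Finite := NA_fin htd x
  have hkA : Ak ⊆ A := fun p hp => ⟨hp.1.1, hp.2⟩
  have hdA : Ad ⊆ A := fun p hp => ⟨hp.1.1, hp.2⟩
  have hunion : A = Ak ∪ Ad := by
    ext p
    constructor
    · rintro ⟨hp1, hp2⟩
      by_cases hk : keptPos t p
      · exact Or.inl ⟨hk, hp2⟩
      · exact Or.inr ⟨dblPos_of_not_kept hp1 hk, hp2⟩
    · rintro (⟨h1, h2⟩ | ⟨h1, h2⟩) <;> exact ⟨h1.1, h2⟩
  have hdisj : Disjoint Ak Ad := by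
    rw [Set.disjoint_left]
    rintro p ⟨h1, _⟩ ⟨h2, _⟩
    exact ((keptPos_iff t p).1 h1).2 h2
  have hcard : A.ncard = Ak.ncard + Ad.ncard := by
    rw [hunion]
    exact Set.ncard_union_eq hdisj (hAfin.subset hkA) (hAfin.subset hdA)
  have hAk_eq : Ak.ncard = NA (Reg t) x := by
    have himg : (fun n => Nat.nth (keptPos t) (n - 1)) '' {n | 1 ≤ n ∧ x ≤ Reg t n} = Ak := by
      ext p
      constructor
      · rintro ⟨n, ⟨hn1, hn2⟩, rfl⟩
        rw [Reg_eval t hn1] at hn2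
        exact ⟨nth_kept_mem htd _, hn2⟩
      · rintro ⟨hp1, hp2⟩
        refine ⟨Nat.count (keptPos t) p + 1, ⟨by omega, ?_⟩, ?_⟩
        · rw [Reg_eval t (by omega), Nat.add_sub_cancel, Nat.nth_count hp1]
          exact hp2
        · show Nat.nth (keptPos t) (Nat.count (keptPos t) p + 1 - 1) = p
          rw [Nat.add_sub_cancel, Nat.nth_count hp1]
    have hinj : Set.InjOn (fun n => Nat.nth (keptPos t) (n - 1)) {n | 1 ≤ n ∧ x ≤ Reg t n} := by
      rintro a ⟨ha1, _⟩ b ⟨hb1, _⟩ hab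
      simp only at hab
      have := Nat.nth_injective (kept_infinite htd) hab
      omega
    rw [← himg, Set.ncard_image_of_injOn hinj]
    rfl
  have hAd_eq : Ad.ncard = (Dset t ∩ Set.Ici x).ncard := by
    have himg : t '' Ad = Dset t ∩ Set.Ici x := by
      ext y
      constructor
      · rintro ⟨p, ⟨hp1, hp2⟩, rfl⟩
        exact ⟨⟨p, hp1, rfl⟩, hp2⟩
      · rintro ⟨⟨i, hi, rfl⟩, hy⟩
        exact ⟨i, ⟨hi, hy⟩, rfl⟩
    have hinj : Set.InjOn t Ad := by
      rintro a ⟨ha, _⟩ b ⟨hb, _⟩ hab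
      by_contra hc
      exact sd_inj htd ha.1 hb.1 hc hab
    rw [← himg, Set.ncard_image_of_injOn hinj]
  unfold NA
  rw [← hA, hcard, hAk_eq, hAd_eq]
  rfl

lemma orbit_zero {v t : ℕ → ℝ} (horb : ∃ g ∈ Dgroup, g v = t) : t 0 = v 0 := by
  obtain ⟨σ, F, hok, ht⟩ := orbit_SP horb
  have h0 : (0 : ℕ) ∉ F := fun hc => by have := hok.2.2.1 0 hc; omega
  rw [ht 0, hok.1, sgn_of_not_mem h0, one_mul]

/-! ### The order is reflected by Reg -/

lemma vset_sd {v t : ℕ → ℝ} (ht : t ∈ Vset v) : StronglyDecr t := ht.2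

lemma vset_orbit {v t : ℕ → ℝ} (ht : t ∈ Vset v) : ∃ g ∈ Dgroup, g v = t := ht.1

lemma leSeq_iff_Reg {v t u : ℕ → ℝ} (hv : StronglyDecr v)
    (ht : t ∈ Vset v) (hu : u ∈ Vset v) :
    leSeq t u ↔ leSeq (Reg t) (Reg u) := by
  have htd := vset_sd ht
  have hud := vset_sd hu
  have hDt : Dset t = Dset v := orbit_Dset hv htd (vset_orbit ht)
  have hDu : Dset u = Dset v := orbit_Dset hv hud (vset_orbit hu)
  rw [leSeq_iff_NA htd hud, leSeq_iff_NA (Reg_sd htd) (Reg_sd hud)]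
  constructor
  · intro h x
    have h1 := NA_split htd x
    have h2 := NA_split hud x
    have := h x
    rw [hDt] at h1
    rw [hDu] at h2
    omega
  · intro h x
    have h1 := NA_split htd x
    have h2 := NA_split hud x
    have := h x
    rw [hDt] at h1
    rw [hDu] at h2
    omega

/-! ### Tail behaviour of counting kept positions -/

noncomputable def Dnum (t : ℕ → ℝ) : ℕ := Set.ncard {i | dblPos t i}

open Classical in
lemma count_tail {t : ℕ → ℝ} (htd : StronglyDecr t) :
    ∃ N, ∀ k, N ≤ k → (keptPos t k ∧ Nat.count (keptPos t) k + Dnum t + 1 = k) := by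
  have hfin := dblPos_finite htd
  obtain ⟨n, hn⟩ := hfin.toFinset.exists_nat_subset_range
  refine ⟨n + 1, fun k hk => ?_⟩
  have hnotdbl : ∀ m, n ≤ m → ¬ dblPos t m := by
    intro m hm hd
    have : m ∈ hfin.toFinset := by rwa [Set.Finite.mem_toFinset]
    have := hn this
    rw [Finset.mem_range] at this
    omega
  constructor
  · rw [keptPos_iff]
    exact ⟨by omega, hnotdbl k (by omega)⟩
  · have hsplit : ((Finset.range k).filter (keptPos t)).card
        + ((Finset.range k).filter (fun i => ¬ keptPos t i)).card = k := by
      rw [Finset.card_filter_add_card_filter_not, Finset.card_range]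
    have heq : (Finset.range k).filter (fun i => ¬ keptPos t i) = insert 0 hfin.toFinset := by
      ext i
      simp only [Finset.mem_filter, Finset.mem_range, Finset.mem_insert,
        Set.Finite.mem_toFinset, Set.mem_setOf_eq]
      constructor
      · rintro ⟨h1, h2⟩
        rcases Nat.eq_zero_or_pos i with rfl | hi
        · exact Or.inl rfl
        · exact Or.inr (dblPos_of_not_kept hi h2)
      · rintro (rfl | hd)
        · refine ⟨by omega, ?_⟩
          rw [keptPos_iff]
          rintro ⟨h, _⟩; omega
        · have hlt : i < n := by
            have : i ∈ hfin.toFinset := by rwa [Set.Finite.mem_toFinset]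
            have := hn this
            rwa [Finset.mem_range] at this
          refine ⟨by omega, ?_⟩
          rw [keptPos_iff]
          rintro ⟨_, h⟩; exact h hd
    have h0 : (0 : ℕ) ∉ hfin.toFinset := by
      rw [Set.Finite.mem_toFinset]
      rintro ⟨h, _⟩; omega
    have hcard : ((Finset.range k).filter (fun i => ¬ keptPos t i)).card = Dnum t + 1 := by
      rw [heq, Finset.card_insert_of_notMem h0, Dnum, Set.ncard_eq_toFinset_card _ hfin]
    rw [Nat.count_eq_card_filter_range]
    have hee : ((Finset.range k).filter (keptPos t)).card
        = ((Finset.range k).filter (fun i => keptPos t i)).card := rfl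
    rw [hee] at hsplit ⊢
    omega

lemma orbit_Dnum {v t : ℕ → ℝ} (hv : StronglyDecr v) (htd : StronglyDecr t)
    (horb : ∃ g ∈ Dgroup, g v = t) : Dnum t = Dnum v := by
  obtain ⟨σ, F, hok, ht⟩ := orbit_SP horb
  have himg : σ '' {i | dblPos t i} = {i | dblPos v i} := by
    ext m
    constructor
    · rintro ⟨i, hi, rfl⟩
      exact (sp_dbl_iff hv htd hok ht hi.1).1 hi
    · intro hm
      refine ⟨σ.symm m, ?_, σ.apply_symm_apply m⟩
      have h1 : 1 ≤ σ.symm m := sp_pos_symm hok hm.1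
      rw [Set.mem_setOf_eq, sp_dbl_iff hv htd hok ht h1, σ.apply_symm_apply]
      exact hm
  unfold Dnum
  rw [← himg, Set.ncard_image_of_injOn (σ.injective.injOn)]

/-! ### Reg maps V(v) into V(Reg v) -/

open Classical in
lemma Reg_mem {v t : ℕ → ℝ} (hv : StronglyDecr v) (ht : t ∈ Vset v) :
    Reg t ∈ Vset (Reg v) := by
  have htd : StronglyDecr t := ht.2
  have horb := ht.1
  obtain ⟨σ, F, hok, hteq⟩ := orbit_SP horb
  have hKt := kept_infinite htd
  have hKv := kept_infinite hv
  set a : ℕ → ℕ := fun n => Nat.nth (keptPos t) (n - 1) with ha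
  have hak : ∀ n, keptPos t (a n) := fun n => nth_kept_mem htd _
  have haσ : ∀ n, keptPos v (σ (a n)) :=
    fun n => (sp_kept_iff hv htd hok hteq (hak n).1).1 (hak n)
  have hacount : ∀ n, Nat.count (keptPos t) (a n) = n - 1 := by
    intro n
    simp only [ha]
    exact Nat.count_nth_of_infinite hKt _
  have hacount' : ∀ k, keptPos t k → a (Nat.count (keptPos t) k + 1) = k := by
    intro k hk
    simp only [ha, Nat.add_sub_cancel]
    exact Nat.nth_count hk
  set σ' : ℕ → ℕ := fun n => if n = 0 then 0 else Nat.count (keptPos v) (σ (a n)) + 1 with hσ'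
  set ρ' : ℕ → ℕ := fun n => if n = 0 then 0
    else Nat.count (keptPos t) (σ.symm (Nat.nth (keptPos v) (n - 1))) + 1 with hρ'
  have hσ'eval : ∀ n, n ≠ 0 → σ' n = Nat.count (keptPos v) (σ (a n)) + 1 := by
    intro n h
    simp only [hσ', if_neg h]
  have hρ'eval : ∀ n, n ≠ 0 →
      ρ' n = Nat.count (keptPos t) (σ.symm (Nat.nth (keptPos v) (n - 1))) + 1 := by
    intro n h
    simp only [hρ', if_neg h]
  have hleft : Function.LeftInverse ρ' σ' := by
    intro n
    rcases Nat.eq_zero_or_pos n with rfl | hn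
    · simp [hσ', hρ']
    rw [hσ'eval n (by omega), hρ'eval _ (by omega), Nat.add_sub_cancel,
      Nat.nth_count (haσ n), σ.symm_apply_apply, hacount n]
    omega
  have hright : Function.RightInverse ρ' σ' := by
    intro n
    rcases Nat.eq_zero_or_pos n with rfl | hn
    · simp [hσ', hρ']
    have hmk : keptPos v (Nat.nth (keptPos v) (n - 1)) := Nat.nth_mem_of_infinite hKv _
    have hsk : keptPos t (σ.symm (Nat.nth (keptPos v) (n - 1))) := by
      have h1 : 1 ≤ σ.symm (Nat.nth (keptPos v) (n - 1)) := sp_pos_symm hok hmk.1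
      rw [sp_kept_iff hv htd hok hteq h1, σ.apply_symm_apply]
      exact hmk
    rw [hρ'eval n (by omega), hσ'eval _ (by omega), hacount' _ hsk, σ.apply_symm_apply,
      Nat.count_nth_of_infinite hKv]
    omega
  set σE : Equiv.Perm ℕ := ⟨σ', ρ', hleft, hright⟩ with hσE
  have hσEeval : ∀ n, σE n = σ' n := fun n => rfl
  set F' : Finset ℕ :=
    (F.filter (fun k => keptPos t k)).image (fun k => Nat.count (keptPos t) k + 1) with hF'
  have hmemF' : ∀ n, 1 ≤ n → (n ∈ F' ↔ a n ∈ F) := by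
    intro n hn
    rw [hF', Finset.mem_image]
    constructor
    · rintro ⟨k, hk, hkn⟩
      rw [Finset.mem_filter] at hk
      have := hacount' k hk.2
      rw [hkn] at this
      rw [← this] at hk
      exact hk.1
    · intro hin
      refine ⟨a n, Finset.mem_filter.2 ⟨hin, hak n⟩, ?_⟩
      rw [hacount n]
      omega
  have hF'1 : ∀ m ∈ F', 1 ≤ m := by
    intro m hm
    rw [hF', Finset.mem_image] at hm
    obtain ⟨k, _, rfl⟩ := hm
    omega
  have hF'e : Even F'.card := by
    rw [hF', Finset.card_image_of_injOn]
    · exact flips_kept_even hv htd hok hteq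
    · intro x hx y hy hxy
      rw [Finset.coe_filter, Set.mem_setOf_eq] at hx hy
      have hxy' : Nat.count (keptPos t) x + 1 = Nat.count (keptPos t) y + 1 := hxy
      have hcc : Nat.count (keptPos t) x = Nat.count (keptPos t) y := by omega
      have := congrArg (Nat.nth (keptPos t)) hcc
      rwa [Nat.nth_count hx.2, Nat.nth_count hy.2] at this
  have hDOK : DOK σE F' := by
    refine ⟨by rw [hσEeval]; simp [hσ'], ?_, hF'1, hF'e⟩
    obtain ⟨N₁, hN₁⟩ := count_tail htd
    obtain ⟨N₂, hN₂⟩ := count_tail hv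
    have hDnum : Dnum t = Dnum v := orbit_Dnum hv htd horb
    obtain ⟨n₃, hn₃⟩ := (hok.2.1.toFinset).exists_nat_subset_range
    have hσid : ∀ m, n₃ ≤ m → σ m = m := by
      intro m hm
      by_contra hc
      have h1 : m ∈ hok.2.1.toFinset := by rwa [Set.Finite.mem_toFinset]
      have := hn₃ h1
      rw [Finset.mem_range] at this
      omega
    refine Set.Finite.subset (Set.finite_Iio (N₁ + N₂ + n₃ + 2)) ?_
    intro k hk
    simp only [Set.mem_Iio]
    by_contra hc
    push_neg at hc
    apply hk
    have hak_ge : k - 1 ≤ a k := by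
      simp only [ha]
      exact Nat.le_nth (fun hf => absurd hf hKt)
    show σE k = k
    rw [hσEeval, hσ'eval k (by omega), hσid (a k) (by omega)]
    have h1 := hN₁ (a k) (by omega)
    have h2 := hN₂ (a k) (by omega)
    have h3 := hacount k
    omega
  obtain ⟨g, hgD, hg⟩ := signed_perm_mem F' hF'1 hF'e σE hDOK.1 hDOK.2.1
  refine ⟨⟨g, hgD, ?_⟩, Reg_sd htd⟩
  funext n
  rw [hg (Reg v) n]
  rcases Nat.eq_zero_or_pos n with rfl | hn
  · have h0 : (0 : ℕ) ∉ F' := fun hc => by have := hF'1 0 hc; omega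
    have hσE0 : σE 0 = 0 := hDOK.1
    rw [sgn_of_not_mem h0, hσE0, one_mul, Reg_zero, Reg_zero, orbit_zero horb]
  · rw [hσEeval, hσ'eval n (by omega), Reg_eval v (by omega), Reg_eval t hn,
      Nat.add_sub_cancel, Nat.nth_count (haσ n)]
    have hsgn : sgn F' n = sgn F (a n) := by
      unfold sgn
      exact if_congr (hmemF' n hn) rfl rfl
    rw [hsgn]
    exact (hteq (a n)).symm

/-! ### Reg v has no doubletons; gap trichotomy; unique enumerations -/

lemma Reg_no_dbl {v : ℕ → ℝ} (hv : StronglyDecr v) (n : ℕ) : ¬ dblPos (Reg v) n := by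
  rintro ⟨hn1, m, hm1, hm2, hm3⟩
  rw [Reg_eval v hm1, Reg_eval v hn1] at hm3
  set i := Nat.nth (keptPos v) (n - 1) with hi
  set j := Nat.nth (keptPos v) (m - 1) with hj
  have hik : keptPos v i := nth_kept_mem hv _
  have hjk : keptPos v j := nth_kept_mem hv _
  have hne : j ≠ i := by
    intro hc
    apply hm2
    have := Nat.nth_injective (kept_infinite hv) (hj ▸ hi ▸ hc)
    omega
  exact hik.2 j hjk.1 hne hm3

lemma vset_no_dbl {v u : ℕ → ℝ} (hv : StronglyDecr v) (hu : u ∈ Vset (Reg v)) (n : ℕ) :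
    ¬ dblPos u n := by
  intro hd
  obtain ⟨σ, F, hok, hueq⟩ := orbit_SP hu.1
  exact Reg_no_dbl hv (σ n) ((sp_dbl_iff (Reg_sd hv) hu.2 hok hueq hd.1).1 hd)

lemma no_dbl_Dset {u : ℕ → ℝ} (h : ∀ n, ¬ dblPos u n) : Dset u = ∅ := by
  ext x
  simp only [Set.mem_empty_iff_false, iff_false]
  rintro ⟨i, hi, _⟩
  exact h i hi

/-- Any entry of `v` other than the two members of a doubleton differs from the
doubleton value by at least 1 in absolute value. -/
lemma gap_trichotomy {v : ℕ → ℝ} (hv : StronglyDecr v) {i k : ℕ} (hi : dblPos v i)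
    (hk : 1 ≤ k) (h1 : v k ≠ v i) (h2 : v k ≠ -v i) :
    |v k| + 1 ≤ |v i| ∨ |v i| + 1 ≤ |v k| := by
  obtain ⟨hp1, hp2, hp3⟩ := partner_spec hi
  set j := partner v i with hj
  have hex : ∃ p q, 1 ≤ p ∧ 1 ≤ q ∧ p < q ∧ v p = |v i| ∧ v q = -|v i|
      ∧ k ≠ p ∧ k ≠ q := by
    rcases Ne.lt_or_gt (Ne.symm hp2) with h | h
    · -- i < j : v i positive
      have hlt := sd_lt hv hi.1 h
      rw [hp3] at hlt
      have hpos : 0 < v i := by linarith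
      refine ⟨i, j, hi.1, hp1, h, (abs_of_pos hpos).symm, by rw [abs_of_pos hpos]; exact hp3,
        ?_, ?_⟩
      · intro hc; exact h1 (by rw [hc])
      · intro hc; exact h2 (by rw [hc]; exact hp3)
    · -- j < i : v i negative
      have hlt := sd_lt hv hp1 h
      rw [hp3] at hlt
      have hneg : v i < 0 := by linarith
      refine ⟨j, i, hp1, hi.1, h, ?_, ?_, ?_, ?_⟩
      · rw [abs_of_neg hneg]; exact hp3
      · rw [abs_of_neg hneg]; ring
      · intro hc; exact h2 (by rw [hc]; exact hp3)
      · intro hc; exact h1 (by rw [hc])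
  obtain ⟨p, q, hp, hq, hpq, hvp, hvq, hkp, hkq⟩ := hex
  have hc0 : 0 ≤ |v i| := abs_nonneg _
  rcases lt_trichotomy k p with h | h | h
  · right
    have := sd_lt hv hk h
    rw [hvp] at this
    have h3 : |v i| + 1 ≤ v k := by linarith
    exact le_trans h3 (le_abs_self _)
  · exact (hkp h).elim
  · rcases lt_trichotomy k q with h' | h' | h'
    · left
      have hb1 := sd_lt hv hp h
      have hb2 := sd_lt hv hk h'
      rw [hvp] at hb1
      rw [hvq] at hb2
      have h3 : |v k| ≤ |v i| - 1 := abs_le.2 ⟨by linarith, by linarith⟩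
      linarith
    · exact (hkq h').elim
    · right
      have := sd_lt hv hq h'
      rw [hvq] at this
      have h3 : |v i| + 1 ≤ -v k := by linarith
      exact le_trans h3 (neg_le_abs _)

lemma enum_unique {t u : ℕ → ℝ}
    (hts : ∀ m n, 1 ≤ m → m < n → t n < t m)
    (hus : ∀ m n, 1 ≤ m → m < n → u n < u m)
    (hE : {x | ∃ n, 1 ≤ n ∧ t n = x} = {x | ∃ n, 1 ≤ n ∧ u n = x}) :
    ∀ n, 1 ≤ n → t n = u n := by
  intro n
  induction n using Nat.strong_induction_on with
  | _ n ih =>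
    intro hn
    have h1 : t n ∈ {x | ∃ m, 1 ≤ m ∧ u m = x} := by
      rw [← hE]; exact ⟨n, hn, rfl⟩
    have h2 : u n ∈ {x | ∃ m, 1 ≤ m ∧ t m = x} := by
      rw [hE]; exact ⟨n, hn, rfl⟩
    obtain ⟨m, hm1, hm2⟩ := h1
    obtain ⟨m', hm'1, hm'2⟩ := h2
    have hc1 : t n ≤ u n := by
      rcases lt_trichotomy m n with h | h | h
      · exfalso
        have e : t n = t m := by rw [← hm2, ih m h hm1]
        exact absurd (hts m n hm1 h) (by rw [e]; exact lt_irrefl _)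
      · exact le_of_eq (by rw [← hm2, h])
      · rw [← hm2]
        exact le_of_lt (hus n m hn h)
    have hc2 : u n ≤ t n := by
      rcases lt_trichotomy m' n with h | h | h
      · exfalso
        have e : u n = u m' := by rw [← hm'2, ih m' h hm'1]
        exact absurd (hus m' n hm'1 h) (by rw [e]; exact lt_irrefl _)
      · exact le_of_eq (by rw [← hm'2, h])
      · rw [← hm'2]
        exact le_of_lt (hts n m' hn h)
    linarith

/-! ### Enumerating a discrete set of reals in decreasing order -/

lemma exists_greatest_below {S : Set ℝ} (hfin : ∀ x, (S ∩ Set.Ici x).Finite) {x : ℝ}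
    (hub : ∃ y ∈ S, y < x) :
    ∃ g, (g ∈ S ∧ g < x) ∧ ∀ s ∈ S, s < x → s ≤ g := by
  obtain ⟨y0, hy0S, hy0x⟩ := hub
  have hTfin : (S ∩ Set.Ici y0 ∩ Set.Iio x).Finite :=
    ((hfin y0).subset (fun z hz => hz.1))
  have hy0T : y0 ∈ hTfin.toFinset := by
    rw [Set.Finite.mem_toFinset]
    exact ⟨⟨hy0S, Set.mem_Ici.2 le_rfl⟩, Set.mem_Iio.2 hy0x⟩
  set g := hTfin.toFinset.max' ⟨y0, hy0T⟩ with hg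
  have hgT : g ∈ S ∩ Set.Ici y0 ∩ Set.Iio x := by
    rw [← Set.Finite.mem_toFinset hTfin]
    exact hTfin.toFinset.max'_mem _
  refine ⟨g, ⟨hgT.1.1, Set.mem_Iio.1 hgT.2⟩, fun s hs hsx => ?_⟩
  rcases le_or_gt y0 s with h | h
  · refine hTfin.toFinset.le_max' s ?_
    rw [Set.Finite.mem_toFinset]
    exact ⟨⟨hs, Set.mem_Ici.2 h⟩, Set.mem_Iio.2 hsx⟩
  · exact le_trans h.le (hTfin.toFinset.le_max' y0 hy0T)

lemma exists_max {S : Set ℝ} (hfin : ∀ x, (S ∩ Set.Ici x).Finite) (hne : S.Nonempty) :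
    ∃ g ∈ S, ∀ s ∈ S, s ≤ g := by
  obtain ⟨y0, hy0S⟩ := hne
  have hTfin : (S ∩ Set.Ici y0).Finite := hfin y0
  have hy0T : y0 ∈ hTfin.toFinset := by
    rw [Set.Finite.mem_toFinset]
    exact ⟨hy0S, Set.mem_Ici.2 le_rfl⟩
  set g := hTfin.toFinset.max' ⟨y0, hy0T⟩ with hg
  have hgT : g ∈ S ∩ Set.Ici y0 := by
    rw [← Set.Finite.mem_toFinset hTfin]
    exact hTfin.toFinset.max'_mem _
  refine ⟨g, hgT.1, fun s hs => ?_⟩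
  rcases le_or_gt y0 s with h | h
  · refine hTfin.toFinset.le_max' s ?_
    rw [Set.Finite.mem_toFinset]
    exact ⟨hs, Set.mem_Ici.2 h⟩
  · exact le_trans h.le (hTfin.toFinset.le_max' y0 hy0T)

lemma enum_exists {S : Set ℝ} (hfin : ∀ x, (S ∩ Set.Ici x).Finite) (hne : S.Nonempty)
    (hunb : ∀ x, ∃ y ∈ S, y < x) :
    ∃ f : ℕ → ℝ, StrictAnti f ∧ Set.range f = S := by
  have hgb : ∀ x : ℝ, ∃ g, (g ∈ S ∧ g < x) ∧ ∀ s ∈ S, s < x → s ≤ g :=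
    fun x => exists_greatest_below hfin (hunb x)
  choose g hg1 hg2 using hgb
  obtain ⟨m0, hm0S, hm0max⟩ := exists_max hfin hne
  set f : ℕ → ℝ := fun n => Nat.rec m0 (fun _ prev => g prev) n with hf
  have hf0 : f 0 = m0 := rfl
  have hfs : ∀ n, f (n + 1) = g (f n) := fun n => rfl
  have hmem : ∀ n, f n ∈ S := by
    intro n
    induction n with
    | zero => exact hm0S
    | succ n _ => rw [hfs]; exact (hg1 (f n)).1
  have hstep : ∀ n, f (n + 1) < f n := by
    intro n
    rw [hfs]; exact (hg1 (f n)).2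
  have hsa : StrictAnti f := strictAnti_nat_of_succ_lt hstep
  refine ⟨f, hsa, ?_⟩
  have hkey : ∀ m, ∀ s ∈ S, (S ∩ Set.Ioi s).ncard = m → f m = s := by
    intro m
    induction m using Nat.strong_induction_on with
    | _ m ih =>
      intro s hs hm
      rcases Nat.eq_zero_or_pos m with rfl | hmpos
      · have hfinI : (S ∩ Set.Ioi s).Finite :=
          (hfin s).subset (fun z hz => ⟨hz.1, Set.mem_Ici.2 (Set.mem_Ioi.1 hz.2).le⟩)
        have hempty : S ∩ Set.Ioi s = ∅ := by rwa [← Set.ncard_eq_zero hfinI]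
        rw [hf0]
        rcases eq_or_lt_of_le (hm0max s hs) with h | h
        · exact h.symm
        · exfalso
          have : m0 ∈ S ∩ Set.Ioi s := ⟨hm0S, Set.mem_Ioi.2 h⟩
          rw [hempty] at this
          exact this
      · obtain ⟨m', rfl⟩ : ∃ m', m = m' + 1 := ⟨m - 1, by omega⟩
        have hfinI : (S ∩ Set.Ioi s).Finite :=
          (hfin s).subset (fun z hz => ⟨hz.1, Set.mem_Ici.2 (Set.mem_Ioi.1 hz.2).le⟩)
        have hne' : (S ∩ Set.Ioi s).Nonempty := by
          rw [Set.nonempty_iff_ne_empty]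
          intro hc
          rw [hc, Set.ncard_empty] at hm
          omega
        obtain ⟨ym, hymT⟩ := hne'
        have hym' : ym ∈ hfinI.toFinset := by rwa [Set.Finite.mem_toFinset]
        set s' := hfinI.toFinset.min' ⟨ym, hym'⟩ with hs'
        have hs'T : s' ∈ S ∩ Set.Ioi s := by
          rw [← Set.Finite.mem_toFinset hfinI]
          exact hfinI.toFinset.min'_mem _
        have hs'gt : s < s' := Set.mem_Ioi.1 hs'T.2
        have hs'min : ∀ y ∈ S ∩ Set.Ioi s, s' ≤ y := by
          intro y hy
          exact hfinI.toFinset.min'_le y (by rwa [Set.Finite.mem_toFinset])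
        have hsplit : S ∩ Set.Ioi s = insert s' (S ∩ Set.Ioi s') := by
          ext y
          constructor
          · intro hy
            rcases eq_or_ne y s' with rfl | hne2
            · exact Set.mem_insert _ _
            · refine Set.mem_insert_iff.2 (Or.inr ⟨hy.1, ?_⟩)
              rcases lt_or_eq_of_le (hs'min y hy) with h | h
              · exact Set.mem_Ioi.2 h
              · exact (hne2 h.symm).elim
          · rintro (rfl | hy)
            · exact hs'T
            · exact ⟨hy.1, Set.mem_Ioi.2 (lt_trans hs'gt (Set.mem_Ioi.1 hy.2))⟩
        have hnotmem : s' ∉ S ∩ Set.Ioi s' := fun hc => lt_irrefl _ (Set.mem_Ioi.1 hc.2)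
        have hcard' : (S ∩ Set.Ioi s').ncard = m' := by
          have hfinI' : (S ∩ Set.Ioi s').Finite :=
            (hfin s').subset (fun z hz => ⟨hz.1, Set.mem_Ici.2 (Set.mem_Ioi.1 hz.2).le⟩)
          have := Set.ncard_insert_of_notMem hnotmem hfinI'
          rw [← hsplit, hm] at this
          omega
        have hfm' : f m' = s' := ih m' (by omega) s' hs'T.1 hcard'
        rw [hfs, hfm']
        have hg1' := hg1 s'
        have hg2' := hg2 s'
        have hle1 : s ≤ g s' := hg2' s hs hs'gt
        have hle2 : g s' ≤ s := by
          by_contra hc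
          push_neg at hc
          have hmm : g s' ∈ S ∩ Set.Ioi s := ⟨hg1'.1, Set.mem_Ioi.2 hc⟩
          have := hs'min _ hmm
          exact absurd hg1'.2 (not_lt.2 this)
        linarith
  ext y
  constructor
  · rintro ⟨n, rfl⟩
    exact hmem n
  · intro hy
    exact ⟨(S ∩ Set.Ioi y).ncard, hkey _ y hy rfl⟩

/-! ### Counting along an enumeration, and tails -/

lemma enum_count {w : ℕ → ℝ} {S : Set ℝ} (hfin : ∀ x, (S ∩ Set.Ici x).Finite)
    (hws : ∀ m n, 1 ≤ m → m < n → w n < w m)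
    (hE : {x | ∃ k, 1 ≤ k ∧ w k = x} = S) {k : ℕ} (hk : 1 ≤ k) :
    (S ∩ Set.Ici (w k)).ncard = k := by
  have himg : w '' (Set.Icc 1 k) = S ∩ Set.Ici (w k) := by
    ext y
    constructor
    · rintro ⟨m, hm, rfl⟩
      rw [Set.mem_Icc] at hm
      refine ⟨by rw [← hE]; exact ⟨m, hm.1, rfl⟩, Set.mem_Ici.2 ?_⟩
      rcases eq_or_lt_of_le hm.2 with rfl | h
      · exact le_rfl
      · exact (hws m k hm.1 h).le
    · rintro ⟨hyS, hyge⟩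
      rw [Set.mem_Ici] at hyge
      rw [← hE] at hyS
      obtain ⟨m, hm1, rfl⟩ := hyS
      refine ⟨m, Set.mem_Icc.2 ⟨hm1, ?_⟩, rfl⟩
      by_contra hc
      push_neg at hc
      exact absurd hyge (not_le.2 (hws k m hk hc))
  have hinj : Set.InjOn w (Set.Icc 1 k) := by
    intro a ha b hb hab
    rw [Set.mem_Icc] at ha hb
    by_contra hc
    rcases Ne.lt_or_gt hc with h | h
    · exact absurd hab (ne_of_gt (hws a b ha.1 h))
    · exact absurd hab (ne_of_lt (hws b a hb.1 h))
  rw [← himg, Set.ncard_image_of_injOn hinj, ← Finset.coe_Icc, Set.ncard_coe_finset,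
    Nat.card_Icc]
  omega

lemma enum_succ_greatest {w : ℕ → ℝ} {S : Set ℝ}
    (hws : ∀ m n, 1 ≤ m → m < n → w n < w m)
    (hE : {x | ∃ k, 1 ≤ k ∧ w k = x} = S) {k : ℕ} (hk : 1 ≤ k) :
    w (k + 1) ∈ S ∧ w (k + 1) < w k ∧ ∀ s ∈ S, s < w k → s ≤ w (k + 1) := by
  refine ⟨by rw [← hE]; exact ⟨k + 1, by omega, rfl⟩, hws k (k + 1) hk (by omega), ?_⟩
  intro s hs hsk
  rw [← hE] at hs
  obtain ⟨m, hm1, rfl⟩ := hs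
  have hmk : k < m := by
    by_contra hc
    push_neg at hc
    rcases eq_or_lt_of_le hc with rfl | h
    · exact lt_irrefl _ hsk
    · exact absurd hsk (not_lt.2 (hws m k hm1 h).le)
  rcases eq_or_lt_of_le (by omega : k + 1 ≤ m) with rfl | h
  · exact le_rfl
  · exact (hws (k + 1) m (by omega) h).le

lemma enum_mem_iio {w : ℕ → ℝ} {S : Set ℝ} (hfin : ∀ x, (S ∩ Set.Ici x).Finite)
    (hws : ∀ m n, 1 ≤ m → m < n → w n < w m)
    (hE : {x | ∃ k, 1 ≤ k ∧ w k = x} = S) {x₀ : ℝ} {k : ℕ}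
    (hk : (S ∩ Set.Ici x₀).ncard + 1 ≤ k) : w k < x₀ := by
  by_contra hge
  push_neg at hge
  have h1 : S ∩ Set.Ici (w k) ⊆ S ∩ Set.Ici x₀ :=
    fun y hy => ⟨hy.1, Set.mem_Ici.2 (le_trans hge (Set.mem_Ici.1 hy.2))⟩
  have h2 := Set.ncard_le_ncard h1 (hfin x₀)
  rw [enum_count hfin hws hE (by omega : 1 ≤ k)] at h2
  omega

/-- The element at the first position past the elements `≥ x₀` is the greatest
element of `S` below `x₀`. -/
lemma enum_base_max {w : ℕ → ℝ} {S : Set ℝ} (hfin : ∀ x, (S ∩ Set.Ici x).Finite)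
    (hws : ∀ m n, 1 ≤ m → m < n → w n < w m)
    (hE : {x | ∃ k, 1 ≤ k ∧ w k = x} = S) (x₀ : ℝ) :
    w ((S ∩ Set.Ici x₀).ncard + 1) ∈ S ∩ Set.Iio x₀ ∧
      ∀ s ∈ S ∩ Set.Iio x₀, s ≤ w ((S ∩ Set.Ici x₀).ncard + 1) := by
  set c := (S ∩ Set.Ici x₀).ncard with hc
  have hk1 : 1 ≤ c + 1 := by omega
  have hwmem : w (c + 1) ∈ S := by rw [← hE]; exact ⟨c + 1, hk1, rfl⟩
  have hwlt : w (c + 1) < x₀ := enum_mem_iio hfin hws hE (le_refl _)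
  refine ⟨⟨hwmem, Set.mem_Iio.2 hwlt⟩, ?_⟩
  have hioi : S ∩ Set.Ioi (w (c + 1)) = S ∩ Set.Ici x₀ := by
    have hsub : S ∩ Set.Ici x₀ ⊆ S ∩ Set.Ioi (w (c + 1)) :=
      fun y hy => ⟨hy.1, Set.mem_Ioi.2 (lt_of_lt_of_le hwlt (Set.mem_Ici.1 hy.2))⟩
    have hins : S ∩ Set.Ici (w (c + 1)) = insert (w (c + 1)) (S ∩ Set.Ioi (w (c + 1))) := by
      ext y
      constructor
      · rintro ⟨hyS, hyge⟩
        rw [Set.mem_Ici] at hyge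
        rcases eq_or_lt_of_le hyge with h | h
        · exact Set.mem_insert_iff.2 (Or.inl h.symm)
        · exact Set.mem_insert_iff.2 (Or.inr ⟨hyS, Set.mem_Ioi.2 h⟩)
      · rintro (rfl | hy)
        · exact ⟨hwmem, Set.mem_Ici.2 le_rfl⟩
        · exact ⟨hy.1, Set.mem_Ici.2 (Set.mem_Ioi.1 hy.2).le⟩
    have hfin1 : (S ∩ Set.Ioi (w (c + 1))).Finite :=
      (hfin (w (c + 1))).subset (fun z hz => ⟨hz.1, Set.mem_Ici.2 (Set.mem_Ioi.1 hz.2).le⟩)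
    have hcnt1 : (S ∩ Set.Ici (w (c + 1))).ncard = c + 1 := enum_count hfin hws hE hk1
    have hnm : w (c + 1) ∉ S ∩ Set.Ioi (w (c + 1)) := fun hcon => lt_irrefl _ (Set.mem_Ioi.1 hcon.2)
    have := Set.ncard_insert_of_notMem hnm hfin1
    rw [← hins, hcnt1] at this
    exact (Set.eq_of_subset_of_ncard_le hsub (by omega) hfin1).symm
  intro s hs
  by_contra hcon
  push_neg at hcon
  have hmm : s ∈ S ∩ Set.Ioi (w (c + 1)) := ⟨hs.1, Set.mem_Ioi.2 hcon⟩
  rw [hioi] at hmm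
  exact absurd (Set.mem_Iio.1 hs.2) (not_lt.2 (Set.mem_Ici.1 hmm.2))

lemma enum_tail {w u : ℕ → ℝ} {S T : Set ℝ}
    (hfinS : ∀ x, (S ∩ Set.Ici x).Finite) (hfinT : ∀ x, (T ∩ Set.Ici x).Finite)
    (hws : ∀ m n, 1 ≤ m → m < n → w n < w m)
    (hus : ∀ m n, 1 ≤ m → m < n → u n < u m)
    (hES : {x | ∃ k, 1 ≤ k ∧ w k = x} = S)
    (hET : {x | ∃ k, 1 ≤ k ∧ u k = x} = T)
    {x₀ : ℝ} (hST : S ∩ Set.Iio x₀ = T ∩ Set.Iio x₀)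
    (hcnt : (S ∩ Set.Ici x₀).ncard = (T ∩ Set.Ici x₀).ncard) :
    ∀ k, (S ∩ Set.Ici x₀).ncard + 1 ≤ k → w k = u k := by
  have hbase : w ((S ∩ Set.Ici x₀).ncard + 1) = u ((S ∩ Set.Ici x₀).ncard + 1) := by
    obtain ⟨hw1, hw2⟩ := enum_base_max hfinS hws hES x₀
    obtain ⟨hu1, hu2⟩ := enum_base_max hfinT hus hET x₀
    rw [← hcnt] at hu1 hu2
    have h1 : w ((S ∩ Set.Ici x₀).ncard + 1) ≤ u ((S ∩ Set.Ici x₀).ncard + 1) :=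
      hu2 _ (hST ▸ hw1)
    have h2 : u ((S ∩ Set.Ici x₀).ncard + 1) ≤ w ((S ∩ Set.Ici x₀).ncard + 1) :=
      hw2 _ (hST ▸ hu1)
    linarith
  intro k hk
  induction k, hk using Nat.le_induction with
  | base => exact hbase
  | succ k hck ih =>
    have hk1 : 1 ≤ k := by omega
    have hwk_lt : w k < x₀ := enum_mem_iio hfinS hws hES hck
    obtain ⟨hw1, hw2, hw3⟩ := enum_succ_greatest hws hES hk1
    obtain ⟨hu1, hu2, hu3⟩ := enum_succ_greatest hus hET hk1
    have hwmem : w (k + 1) ∈ T := by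
      have h0 : w (k + 1) ∈ S ∩ Set.Iio x₀ := ⟨hw1, Set.mem_Iio.2 (lt_trans hw2 hwk_lt)⟩
      rw [hST] at h0
      exact h0.1
    have humem : u (k + 1) ∈ S := by
      have hu2' : u (k + 1) < w k := by rw [ih]; exact hu2
      have h0 : u (k + 1) ∈ T ∩ Set.Iio x₀ := ⟨hu1, Set.mem_Iio.2 (lt_trans hu2' hwk_lt)⟩
      rw [← hST] at h0
      exact h0.1
    have h1 : w (k + 1) ≤ u (k + 1) := hu3 _ hwmem (by rw [← ih]; exact hw2)
    have h2 : u (k + 1) ≤ w (k + 1) := hw3 _ humem (by rw [ih]; exact hu2)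
    linarith

lemma sd_strict {t : ℕ → ℝ} (htd : StronglyDecr t) :
    ∀ m n, 1 ≤ m → m < n → t n < t m := by
  intro m n hm hmn
  linarith [sd_lt htd hm hmn]

lemma dbl_not_kept {t : ℕ → ℝ} {i : ℕ} (h : dblPos t i) : ¬ keptPos t i := by
  rw [keptPos_iff]
  rintro ⟨_, hc⟩
  exact hc h

open Classical in
lemma Reg_surj {v u : ℕ → ℝ} (hv : StronglyDecr v) (hu : u ∈ Vset (Reg v)) :
    ∃ w ∈ Vset v, Reg w = u := by
  have hud : StronglyDecr u := hu.2
  have hRv : StronglyDecr (Reg v) := Reg_sd hv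
  obtain ⟨π, G, hπok, hueq⟩ := orbit_SP hu.1
  have hKv := kept_infinite hv
  set D : Set ℝ := Dset v with hD
  set EU : Set ℝ := {x | ∃ k, 1 ≤ k ∧ u k = x} with hEU
  set S : Set ℝ := D ∪ EU with hS
  have hF2 : ∀ k, 1 ≤ k → ∃ m, keptPos v m ∧ (u k = v m ∨ u k = -v m) := by
    intro k hk
    have hπk : 1 ≤ π k := sp_pos hπok hk
    have h1 := hueq k
    rw [Reg_eval v hπk] at h1
    refine ⟨Nat.nth (keptPos v) (π k - 1), nth_kept_mem hv _, ?_⟩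
    rcases sgn_cases G k with h | h <;> rw [h] at h1
    · left; rw [h1, one_mul]
    · right; rw [h1]; ring
  have hF3 : ∀ d ∈ D, ∀ k, 1 ≤ k → 1 ≤ |u k - d| := by
    rintro d ⟨i, hi, rfl⟩ k hk
    obtain ⟨m, hm, hum⟩ := hF2 k hk
    have hmne1 : v m ≠ v i := by
      intro hc
      have hmi : m = i := by
        by_contra hcc
        exact sd_inj hv hm.1 hi.1 hcc hc
      exact dbl_not_kept (hmi ▸ hi) hm
    have hmne2 : v m ≠ -v i := by
      intro hc
      obtain ⟨hp1, hp2, hp3⟩ := partner_spec hi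
      have hmp : m = partner v i := by
        by_contra hcc
        exact sd_inj hv hm.1 hp1 hcc (hc.trans hp3.symm)
      exact dbl_not_kept (hmp ▸ partner_dbl hi) hm
    have htri := gap_trichotomy hv hi hm.1 hmne1 hmne2
    have habs : 1 ≤ |(|u k| - |v i|)| := by
      have he : |u k| = |v m| := by
        rcases hum with h | h <;> rw [h] <;> simp [abs_neg]
      rw [he]
      rcases htri with h | h
      · rw [abs_of_nonpos (by linarith)]; linarith
      · rw [abs_of_nonneg (by linarith)]; linarith
    calc (1 : ℝ) ≤ |(|u k| - |v i|)| := habs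
      _ ≤ |u k - v i| := abs_abs_sub_abs_le_abs_sub _ _
  have hGAP : ∀ x ∈ S, ∀ y ∈ S, x ≠ y → 1 ≤ |x - y| := by
    intro x hx y hy hxy
    rcases hx with hx | hx <;> rcases hy with hy | hy
    · obtain ⟨i, hi, rfl⟩ := hx
      obtain ⟨j, hj, rfl⟩ := hy
      refine sd_gap hv hi.1 hj.1 ?_
      intro hc; exact hxy (by rw [hc])
    · obtain ⟨k, hk, rfl⟩ := hy
      rw [abs_sub_comm]
      exact hF3 x hx k hk
    · obtain ⟨k, hk, rfl⟩ := hx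
      exact hF3 y hy k hk
    · obtain ⟨k, hk, rfl⟩ := hx
      obtain ⟨l, hl, rfl⟩ := hy
      refine sd_gap hud hk hl ?_
      intro hc; exact hxy (by rw [hc])
  have hF6 : ∀ x ∈ D, x ∉ EU := by
    rintro x ⟨i, hi, rfl⟩ ⟨k, hk, huk⟩
    obtain ⟨m, hm, hum⟩ := hF2 k hk
    rw [huk] at hum
    rcases hum with h | h
    · have hmi : i = m := by
        by_contra hc
        exact sd_inj hv hi.1 hm.1 hc h
      exact dbl_not_kept hi (hmi ▸ hm)
    · rcases eq_or_ne i m with rfl | hne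
      · have h0 : v i = 0 := by linarith
        obtain ⟨hp1, hp2, hp3⟩ := partner_spec hi
        have heq : v (partner v i) = v i := by rw [hp3, h0]; norm_num
        have : partner v i = i := by
          by_contra hcx
          exact sd_inj hv hp1 hi.1 hcx heq
        exact hp2 this
      · exact hm.2 i hi.1 hne h
  -- the merged set S can be enumerated
  have hDfin : D.Finite := by
    have he : D = v '' {i | dblPos v i} := by
      ext y
      constructor
      · rintro ⟨i, hi, rfl⟩; exact ⟨i, hi, rfl⟩
      · rintro ⟨i, hi, rfl⟩; exact ⟨i, hi, rfl⟩
    rw [he]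
    exact (dblPos_finite hv).image v
  have hSfin : ∀ x, (S ∩ Set.Ici x).Finite := by
    intro x
    have hEUfin : (EU ∩ Set.Ici x).Finite := by
      refine Set.Finite.subset ((NA_fin hud x).image u) ?_
      rintro y ⟨⟨k, hk, rfl⟩, hy⟩
      exact ⟨k, ⟨hk, Set.mem_Ici.1 hy⟩, rfl⟩
    refine Set.Finite.subset (hDfin.union hEUfin) ?_
    rintro y ⟨hy1 | hy1, hy2⟩
    · exact Or.inl hy1
    · exact Or.inr ⟨hy1, hy2⟩
  have hSne : S.Nonempty := ⟨u 1, Or.inr ⟨1, le_rfl, rfl⟩⟩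
  have hSunb : ∀ x, ∃ y ∈ S, y < x := by
    intro x
    obtain ⟨N, hN1, hN⟩ := sd_tendsto hud x
    exact ⟨u N, Or.inr ⟨N, hN1, rfl⟩, hN N le_rfl⟩
  obtain ⟨f, hfsa, hfrange⟩ := enum_exists hSfin hSne hSunb
  set w : ℕ → ℝ := fun k => if k = 0 then v 0 else f (k - 1) with hw
  have hw0 : w 0 = v 0 := rfl
  have hweval : ∀ k, 1 ≤ k → w k = f (k - 1) := by
    intro k hk
    simp only [hw, if_neg (by omega : ¬ k = 0)]
  have hW1 : ∀ m n, 1 ≤ m → m < n → w n < w m := by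
    intro m n hm hmn
    rw [hweval m hm, hweval n (by omega)]
    exact hfsa (by omega : m - 1 < n - 1)
  have hW2 : {x | ∃ k, 1 ≤ k ∧ w k = x} = S := by
    rw [← hfrange]
    ext x
    constructor
    · rintro ⟨k, hk, rfl⟩
      rw [hweval k hk]
      exact ⟨k - 1, rfl⟩
    · rintro ⟨n, rfl⟩
      refine ⟨n + 1, by omega, ?_⟩
      rw [hweval (n + 1) (by omega), Nat.add_sub_cancel]
  have hWmem : ∀ k, 1 ≤ k → w k ∈ S := by
    intro k hk
    rw [← hW2]
    exact ⟨k, hk, rfl⟩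
  have hSm : ∀ x ∈ S, ∃ k, 1 ≤ k ∧ w k = x := by
    intro x hx
    rw [← hW2] at hx
    exact hx
  have hW3 : StronglyDecr w := by
    intro k hk
    have h1 := hW1 k (k + 1) hk (by omega)
    have h2 := hGAP (w k) (hWmem k hk) (w (k + 1)) (hWmem (k + 1) (by omega)) (ne_of_gt h1)
    rw [abs_of_pos (by linarith)] at h2
    linarith
  have hwinjv : ∀ {j k}, 1 ≤ j → 1 ≤ k → w j = w k → j = k := by
    intro j k hj hk he
    by_contra hc
    rcases Ne.lt_or_gt hc with h | h
    · exact absurd he (ne_of_gt (hW1 j k hj h))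
    · exact absurd he (ne_of_lt (hW1 k j hk h))
  have hDneg : ∀ d ∈ D, -d ∈ D := fun d hd => Dset_neg hd
  have hdblw : ∀ k, 1 ≤ k → (dblPos w k ↔ w k ∈ D) := by
    intro k hk
    constructor
    · rintro ⟨_, j, hj1, hj2, hj3⟩
      by_contra hc
      have hwkEU : w k ∈ EU := (hWmem k hk).resolve_left hc
      rcases hWmem j hj1 with h | h
      · have h2 := hDneg _ h
        rw [hj3, neg_neg] at h2
        exact hc h2
      · obtain ⟨m, hm1, hm2⟩ := hwkEU
        obtain ⟨m', hm'1, hm'2⟩ := h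
        have hne : m' ≠ m := by
          intro hcc
          rw [hcc, hm2] at hm'2
          exact hj2 (hwinjv hk hj1 hm'2).symm
        exact vset_no_dbl hv hu m ⟨hm1, m', hm'1, hne, by rw [hm'2, hm2, hj3]⟩
    · intro hd
      obtain ⟨j, hj1, hj2⟩ := hSm _ (Or.inl (hDneg _ hd))
      have hne : j ≠ k := by
        intro hcc
        rw [hcc] at hj2
        have h0 : w k = 0 := by linarith
        obtain ⟨i, hi, hvi⟩ := hd
        obtain ⟨hp1, hp2, hp3⟩ := partner_spec hi
        have heq : v (partner v i) = v i := by rw [hp3, hvi, h0]; norm_num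
        have : partner v i = i := by
          by_contra hcx
          exact sd_inj hv hp1 hi.1 hcx heq
        exact hp2 this
      exact ⟨hk, j, hj1, hne, hj2⟩
  have hkeptw : ∀ k, 1 ≤ k → (keptPos w k ↔ w k ∈ EU) := by
    intro k hk
    rw [keptPos_iff]
    constructor
    · rintro ⟨_, hnd⟩
      rcases hWmem k hk with h | h
      · exact absurd ((hdblw k hk).2 h) hnd
      · exact h
    · intro h
      exact ⟨hk, fun hdd => hF6 _ ((hdblw k hk).1 hdd) h⟩
  have hW5 : Reg w = u := by
    have hst1 : ∀ m n, 1 ≤ m → m < n → Reg w n < Reg w m := sd_strict (Reg_sd hW3)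
    have hst2 := sd_strict hud
    have hent : {x | ∃ n, 1 ≤ n ∧ Reg w n = x} = {x | ∃ n, 1 ≤ n ∧ u n = x} := by
      rw [Reg_entries hW3]
      ext x
      constructor
      · rintro ⟨i, hik, rfl⟩
        exact (hkeptw i hik.1).1 hik
      · intro hx
        obtain ⟨k, hk1, hk2⟩ := hSm x (Or.inr hx)
        exact ⟨k, (hkeptw k hk1).2 (by rw [hk2]; exact hx), hk2⟩
    have hun := enum_unique hst1 hst2 hent
    funext n
    rcases Nat.eq_zero_or_pos n with rfl | hn
    · rw [Reg_zero, hw0, orbit_zero hu.1, Reg_zero]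
    · exact hun n hn
  -- positions of doubleton values
  have hchoiceV : ∀ k : ℕ, ∃ i, dblPos w k → (dblPos v i ∧ v i = w k) := by
    intro k
    by_cases h : dblPos w k
    · obtain ⟨i, hi, hvi⟩ := (hdblw k h.1).1 h
      exact ⟨i, fun _ => ⟨hi, hvi⟩⟩
    · exact ⟨0, fun hc => absurd hc h⟩
  choose φ hφ using hchoiceV
  have hchoiceW : ∀ m : ℕ, ∃ k, dblPos v m → (dblPos w k ∧ w k = v m) := by
    intro m
    by_cases h : dblPos v m
    · have hmem : v m ∈ D := ⟨m, h, rfl⟩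
      obtain ⟨k, hk1, hk2⟩ := hSm _ (Or.inl hmem)
      exact ⟨k, fun _ => ⟨(hdblw k hk1).2 (by rw [hk2]; exact hmem), hk2⟩⟩
    · exact ⟨0, fun hc => absurd hc h⟩
  choose ψ hψ using hchoiceW
  have hφψ : ∀ m, dblPos v m → φ (ψ m) = m := by
    intro m hm
    obtain ⟨hd1, hd2⟩ := hψ m hm
    obtain ⟨he1, he2⟩ := hφ _ hd1
    have heq : v (φ (ψ m)) = v m := by rw [he2, hd2]
    by_contra hc
    exact sd_inj hv he1.1 hm.1 hc heq
  have hψφ : ∀ k, dblPos w k → ψ (φ k) = k := by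
    intro k hk
    obtain ⟨he1, he2⟩ := hφ k hk
    obtain ⟨hd1, hd2⟩ := hψ _ he1
    exact hwinjv hd1.1 hk.1 (by rw [hd2, he2])
  have hKw := kept_infinite hW3
  set sig : ℕ → ℕ := fun k => if keptPos w k
      then Nat.nth (keptPos v) (π (Nat.count (keptPos w) k + 1) - 1)
      else if 1 ≤ k then φ k else 0 with hsig
  set rho : ℕ → ℕ := fun m => if keptPos v m
      then Nat.nth (keptPos w) (π.symm (Nat.count (keptPos v) m + 1) - 1)
      else if 1 ≤ m then ψ m else 0 with hrho
  have hsig_kept : ∀ k, keptPos w k →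
      sig k = Nat.nth (keptPos v) (π (Nat.count (keptPos w) k + 1) - 1) := by
    intro k h
    simp only [hsig, if_pos h]
  have hsig_dbl : ∀ k, dblPos w k → sig k = φ k := by
    intro k h
    simp only [hsig, if_neg (dbl_not_kept h), if_pos h.1]
  have hsig_zero : sig 0 = 0 := by
    simp only [hsig]
    rw [if_neg (fun hc : keptPos w 0 => by have := hc.1; omega), if_neg (by omega)]
  have hrho_kept : ∀ m, keptPos v m →
      rho m = Nat.nth (keptPos w) (π.symm (Nat.count (keptPos v) m + 1) - 1) := by
    intro m h
    simp only [hrho, if_pos h]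
  have hrho_dbl : ∀ m, dblPos v m → rho m = ψ m := by
    intro m h
    simp only [hrho, if_neg (dbl_not_kept h), if_pos h.1]
  have hrho_zero : rho 0 = 0 := by
    simp only [hrho]
    rw [if_neg (fun hc : keptPos v 0 => by have := hc.1; omega), if_neg (by omega)]
  have hleft : Function.LeftInverse rho sig := by
    intro k
    rcases Nat.eq_zero_or_pos k with rfl | hk
    · rw [hsig_zero, hrho_zero]
    by_cases hkw : keptPos w k
    · rw [hsig_kept k hkw]
      have hn1 : 1 ≤ π (Nat.count (keptPos w) k + 1) := sp_pos hπok (by omega)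
      have hmk : keptPos v (Nat.nth (keptPos v) (π (Nat.count (keptPos w) k + 1) - 1)) :=
        nth_kept_mem hv _
      rw [hrho_kept _ hmk, Nat.count_nth_of_infinite hKv]
      have e1 : π (Nat.count (keptPos w) k + 1) - 1 + 1 = π (Nat.count (keptPos w) k + 1) := by
        omega
      rw [e1, Equiv.symm_apply_apply, Nat.add_sub_cancel, Nat.nth_count hkw]
    · have hdb : dblPos w k := dblPos_of_not_kept hk hkw
      rw [hsig_dbl k hdb, hrho_dbl _ (hφ k hdb).1, hψφ k hdb]
  have hright : Function.RightInverse rho sig := by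
    intro m
    rcases Nat.eq_zero_or_pos m with rfl | hm
    · rw [hrho_zero, hsig_zero]
    by_cases hmv : keptPos v m
    · rw [hrho_kept m hmv]
      have hn1 : 1 ≤ π.symm (Nat.count (keptPos v) m + 1) := sp_pos_symm hπok (by omega)
      have hmk : keptPos w (Nat.nth (keptPos w) (π.symm (Nat.count (keptPos v) m + 1) - 1)) :=
        nth_kept_mem hW3 _
      rw [hsig_kept _ hmk, Nat.count_nth_of_infinite hKw]
      have e1 : π.symm (Nat.count (keptPos v) m + 1) - 1 + 1
          = π.symm (Nat.count (keptPos v) m + 1) := by omega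
      rw [e1, Equiv.apply_symm_apply, Nat.add_sub_cancel, Nat.nth_count hmv]
    · have hdb : dblPos v m := dblPos_of_not_kept hm hmv
      rw [hrho_dbl m hdb, hsig_dbl _ (hψ m hdb).1, hφψ m hdb]
  set sigE : Equiv.Perm ℕ := ⟨sig, rho, hleft, hright⟩ with hsigE
  have hsigEeval : ∀ k, sigE k = sig k := fun _ => rfl
  set FF : Finset ℕ := G.image (fun n => Nat.nth (keptPos w) (n - 1)) with hFF
  have hG1 : ∀ n ∈ G, 1 ≤ n := hπok.2.2.1
  have hFFmem : ∀ k, keptPos w k → (k ∈ FF ↔ Nat.count (keptPos w) k + 1 ∈ G) := by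
    intro k hkw
    rw [hFF, Finset.mem_image]
    constructor
    · rintro ⟨n, hn, rfl⟩
      rw [Nat.count_nth_of_infinite hKw]
      have := hG1 n hn
      have e1 : n - 1 + 1 = n := by omega
      rwa [e1]
    · intro hin
      exact ⟨_, hin, by rw [Nat.add_sub_cancel, Nat.nth_count hkw]⟩
  have hFFkept : ∀ k ∈ FF, keptPos w k := by
    intro k hk
    rw [hFF, Finset.mem_image] at hk
    obtain ⟨n, _, rfl⟩ := hk
    exact nth_kept_mem hW3 _
  have hFF1 : ∀ k ∈ FF, 1 ≤ k := fun k hk => (hFFkept k hk).1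
  have hFFe : Even FF.card := by
    rw [hFF, Finset.card_image_of_injOn]
    · exact hπok.2.2.2
    · intro x hx y hy hxy
      have hx1 := hG1 x hx
      have hy1 := hG1 y hy
      have := Nat.nth_injective hKw hxy
      omega
  -- the defining equation
  have hEQ : ∀ k, w k = sgn FF k * v (sigE k) := by
    intro k
    rcases Nat.eq_zero_or_pos k with rfl | hk
    · have h0 : (0 : ℕ) ∉ FF := fun hc => by have := hFF1 0 hc; omega
      rw [hsigEeval, hsig_zero, sgn_of_not_mem h0, one_mul, hw0]
    by_cases hkw : keptPos w k
    · set n := Nat.count (keptPos w) k + 1 with hn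
      have hwk : w k = u n := by
        have h1 : Reg w n = w k := by
          rw [Reg_eval w (by omega), hn, Nat.add_sub_cancel, Nat.nth_count hkw]
        rw [← h1, hW5]
      have hπn : 1 ≤ π n := sp_pos hπok (by omega)
      have h2 : u n = sgn G n * v (Nat.nth (keptPos v) (π n - 1)) := by
        rw [hueq n, Reg_eval v hπn]
      have h3 : sgn FF k = sgn G n := by
        unfold sgn
        exact if_congr (hFFmem k hkw) rfl rfl
      rw [hsigEeval, hsig_kept k hkw, ← hn, h3, hwk, h2]
    · have hdb : dblPos w k := dblPos_of_not_kept hk hkw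
      have h0 : k ∉ FF := fun hc => hkw (hFFkept k hc)
      rw [hsigEeval, hsig_dbl k hdb, sgn_of_not_mem h0, one_mul, (hφ k hdb).2]
  -- DOK for (sigE, FF) : finite support
  have hDnumwv : Dnum w = Dnum v := by
    have himg : φ '' {k | dblPos w k} = {m | dblPos v m} := by
      ext m
      constructor
      · rintro ⟨k, hk, rfl⟩
        exact (hφ k hk).1
      · intro hm
        exact ⟨ψ m, (hψ m hm).1, hφψ m hm⟩
    have hinj : Set.InjOn φ {k | dblPos w k} := by
      intro a ha b hb hab
      have h1 : v (φ a) = w a := (hφ a ha).2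
      have h2 : v (φ b) = w b := (hφ b hb).2
      rw [hab, h2] at h1
      exact hwinjv ha.1 hb.1 h1.symm
    unfold Dnum
    rw [← himg, Set.ncard_image_of_injOn hinj]
  have hDOKfin : {k | sigE k ≠ k}.Finite := by
    obtain ⟨N₁, hN₁⟩ := count_tail hW3
    obtain ⟨N₂, hN₂⟩ := count_tail hv
    obtain ⟨n₃, hn₃⟩ := (hπok.2.1.toFinset).exists_nat_subset_range
    have hπid : ∀ n, n₃ ≤ n → π n = n := by
      intro n hn
      by_contra hc
      have h1 : n ∈ hπok.2.1.toFinset := by rwa [Set.Finite.mem_toFinset]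
      have := hn₃ h1
      rw [Finset.mem_range] at this
      omega
    refine Set.Finite.subset (Set.finite_Iio (N₁ + N₂ + n₃ + Dnum w + 2)) ?_
    intro k hk
    simp only [Set.mem_Iio]
    by_contra hc
    push_neg at hc
    apply hk
    have h1 := hN₁ k (by omega)
    have h2 := hN₂ k (by omega)
    show sigE k = k
    rw [hsigEeval, hsig_kept k h1.1]
    have e1 : π (Nat.count (keptPos w) k + 1) = Nat.count (keptPos w) k + 1 := by
      apply hπid
      omega
    rw [e1, Nat.add_sub_cancel]
    have e2 : Nat.count (keptPos w) k = Nat.count (keptPos v) k := by omega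
    rw [e2, Nat.nth_count h2.1]
  have hDOK : DOK sigE FF := ⟨by rw [hsigEeval, hsig_zero], hDOKfin, hFF1, hFFe⟩
  obtain ⟨g, hgD, hg⟩ := signed_perm_mem FF hFF1 hFFe sigE hDOK.1 hDOK.2.1
  refine ⟨w, ⟨⟨g, hgD, ?_⟩, hW3⟩, hW5⟩
  funext k
  rw [hg v k]
  exact (hEQ k).symm

/-! ### Final assembly -/

lemma Reg_injOn {v : ℕ → ℝ} (hv : StronglyDecr v) : Set.InjOn Reg (Vset v) := by
  intro t ht u hu he
  have hrefl1 : leSeq (Reg t) (Reg u) := by rw [he]; exact fun i _ => le_rfl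
  have hrefl2 : leSeq (Reg u) (Reg t) := by rw [he]; exact fun i _ => le_rfl
  have h1 : leSeq t u := (leSeq_iff_Reg hv ht hu).2 hrefl1
  have h2 : leSeq u t := (leSeq_iff_Reg hv hu ht).2 hrefl2
  funext n
  rcases Nat.eq_zero_or_pos n with rfl | hn
  · rw [orbit_zero ht.1, orbit_zero hu.1]
  · exact le_antisymm (h1 n hn) (h2 n hn)

lemma main (v : ℕ → ℝ) (hv : StronglyDecr v) :
    (∀ t ∈ Vset v, Reg t ∈ Vset (Reg v)) ∧
    Set.BijOn Reg (Vset v) (Vset (Reg v)) ∧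
    (∀ t ∈ Vset v, ∀ u ∈ Vset v, (leSeq t u ↔ leSeq (Reg t) (Reg u))) ∧
    (∀ t ∈ Vset v, ∀ u ∈ Vset v,
      (SeqCovers (Vset v) t u ↔ SeqCovers (Vset (Reg v)) (Reg t) (Reg u))) := by
  have hmaps : ∀ t ∈ Vset v, Reg t ∈ Vset (Reg v) := fun t ht => Reg_mem hv ht
  have hinj : Set.InjOn Reg (Vset v) := Reg_injOn hv
  have hsurj : Set.SurjOn Reg (Vset v) (Vset (Reg v)) := by
    intro z hz
    obtain ⟨w, hw, hwe⟩ := Reg_surj hv hz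
    exact ⟨w, hw, hwe⟩
  refine ⟨hmaps, ⟨fun t ht => hmaps t ht, hinj, hsurj⟩,
    fun t ht u hu => leSeq_iff_Reg hv ht hu, ?_⟩
  intro t ht u hu
  constructor
  · rintro ⟨hle, hne, hmid⟩
    refine ⟨(leSeq_iff_Reg hv ht hu).1 hle, ?_, ?_⟩
    · intro hc
      exact hne (hinj ht hu hc)
    · rintro ⟨z, hz, hz1, hz2, hz3, hz4⟩
      obtain ⟨s, hs, rfl⟩ := Reg_surj hv hz
      refine hmid ⟨s, hs, ?_, ?_, ?_, ?_⟩
      · intro hc; exact hz1 (by rw [hc])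
      · intro hc; exact hz2 (by rw [hc])
      · exact (leSeq_iff_Reg hv ht hs).2 hz3
      · exact (leSeq_iff_Reg hv hs hu).2 hz4
  · rintro ⟨hle, hne, hmid⟩
    refine ⟨(leSeq_iff_Reg hv ht hu).2 hle, ?_, ?_⟩
    · intro hc; exact hne (by rw [hc])
    · rintro ⟨s, hs, hs1, hs2, hs3, hs4⟩
      refine hmid ⟨Reg s, hmaps s hs, ?_, ?_, ?_, ?_⟩
      · intro hc; exact hs1 (hinj hs ht hc)
      · intro hc; exact hs2 (hinj hs hu hc)
      · exact (leSeq_iff_Reg hv ht hs).1 hs3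
      · exact (leSeq_iff_Reg hv hs hu).1 hs4

end Stmt5


/-- For `v ∈ A⁺`, `Reg` maps `V(v)` into `V(Reg v)` and restricts
to a bijection `V(v) → V(Reg v)`; moreover `t ≤ u ↔ Reg t ≤ Reg u` for
`t, u ∈ V(v)`, so this bijection is an order isomorphism, and in particular
identifies the covering relations. -/
theorem stmt5 (v : ℕ → ℝ) (hv : StronglyDecr v) :
    (∀ t ∈ Vset v, Reg t ∈ Vset (Reg v)) ∧
    Set.BijOn Reg (Vset v) (Vset (Reg v)) ∧
    (∀ t ∈ Vset v, ∀ u ∈ Vset v, (leSeq t u ↔ leSeq (Reg t) (Reg u))) ∧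
    (∀ t ∈ Vset v, ∀ u ∈ Vset v,
      (SeqCovers (Vset v) t u ↔ SeqCovers (Vset (Reg v)) (Reg t) (Reg u))) :=
  Stmt5.main v hv
end

section
/- Let t, u ∈ A^+, let a ∈ ℝ, and let i, j ∈ ℕ. Suppose that the sequences s = (t_1, …, t_i, a, t_{i+1}, t_{i+2}, …) and s′ = (u_1, …, u_j, a, u_{j+1}, u_{j+2}, …), obtained by inserting the value a into t after position i and into u after position j respectively, are both strongly decreasing. Then t ≤ u (entrywise) if and only if s ≤ s′. -/
lemma sd_anti {v : ℕ → ℝ} (h : StronglyDecr v) {m n : ℕ} (hm : 1 ≤ m) (hmn : m ≤ n) :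
    v n ≤ v m := by
  induction n, hmn using Nat.le_induction with
  | base => exact le_refl _
  | succ n hn ih => have := h n (le_trans hm hn); linarith

lemma sd_strict {v : ℕ → ℝ} (h : StronglyDecr v) {m n : ℕ} (hm : 1 ≤ m) (hmn : m < n) :
    v n ≤ v m - 1 := by
  have h1 : v n ≤ v (m + 1) := sd_anti h (by omega) hmn
  have := h m hm
  linarith

lemma ins_le {t : ℕ → ℝ} {i : ℕ} {a : ℝ} {k : ℕ} (hk : k ≤ i) : insertAt t i a k = t k := by
  simp [insertAt, hk]

lemma ins_eq {t : ℕ → ℝ} {i : ℕ} {a : ℝ} : insertAt t i a (i + 1) = a := by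
  simp [insertAt]

lemma ins_gt {t : ℕ → ℝ} {i : ℕ} {a : ℝ} {k : ℕ} (hk : i + 1 < k) :
    insertAt t i a k = t (k - 1) := by
  have h1 : ¬ k ≤ i := by omega
  have h2 : k ≠ i + 1 := by omega
  simp [insertAt, h1, h2]

/-- If inserting the value `a` into the strongly decreasing
sequences `t` (after position `i`) and `u` (after position `j`) again yields
strongly decreasing sequences `s`, `s'`, then `t ≤ u ↔ s ≤ s'` entrywise. -/
theorem stmt6 (t u : ℕ → ℝ) (ht : StronglyDecr t) (hu : StronglyDecr u) (a : ℝ)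
    (i j : ℕ) (hs : StronglyDecr (insertAt t i a)) (hs' : StronglyDecr (insertAt u j a)) :
    leSeq t u ↔ leSeq (insertAt t i a) (insertAt u j a) := by
  set s := insertAt t i a with hsdef
  set s' := insertAt u j a with hs'def
  constructor
  · intro hle k hk
    rcases le_or_gt k i with hki | hki
    · rw [show s k = t k from ins_le hki]
      rcases le_or_gt k j with hkj | hkj
      · rw [show s' k = u k from ins_le hkj]; exact hle k hk
      · rcases eq_or_lt_of_le (show j + 1 ≤ k by omega) with hkj1 | hkj1
        · -- k = j + 1, target t k ≤ a
          subst hkj1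
          rw [show s' (j + 1) = a from ins_eq]
          have h1 : t (j + 1) ≤ u (j + 1) := hle (j + 1) (by omega)
          have h2 : s' (j + 2) ≤ s' (j + 1) - 1 := hs' (j + 1) (by omega)
          rw [show s' (j + 2) = u (j + 1) from ins_gt (by omega),
            show s' (j + 1) = a from ins_eq] at h2
          linarith
        · rw [show s' k = u (k - 1) from ins_gt hkj1]
          have h1 : t k ≤ u k := hle k hk
          have h2 : u k ≤ u (k - 1) := by
            have := sd_anti hu (m := k - 1) (n := k) (by omega) (by omega)
            linarith
          linarith
    · rcases eq_or_lt_of_le (show i + 1 ≤ k by omega) with hki1 | hki1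
      · -- k = i + 1, s k = a
        subst hki1
        rw [show s (i + 1) = a from ins_eq]
        rcases le_or_gt (i + 1) j with hkj | hkj
        · have h1 : s' (j + 1) ≤ s' (i + 1) := sd_anti hs' (by omega) (by omega)
          rw [show s' (j + 1) = a from ins_eq, show s' (i + 1) = u (i + 1) from ins_le hkj]
            at h1
          rw [show s' (i + 1) = u (i + 1) from ins_le hkj]
          exact h1
        · rcases eq_or_lt_of_le (show j + 1 ≤ i + 1 by omega) with hkj1 | hkj1
          · rw [← hkj1, show s' (j + 1) = a from ins_eq]
          · rw [show s' (i + 1) = u i from ins_gt hkj1]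
            have hi1 : 1 ≤ i := by omega
            have h1 : s (i + 1) ≤ s i := sd_anti hs hi1 (by omega)
            rw [show s (i + 1) = a from ins_eq, show s i = t i from ins_le le_rfl] at h1
            have h2 : t i ≤ u i := hle i hi1
            linarith
      · rw [show s k = t (k - 1) from ins_gt hki1]
        have hka : t (k - 1) ≤ a := by
          have h1 : s k ≤ s (i + 1) := sd_anti hs (by omega) (by omega)
          rwa [show s k = t (k - 1) from ins_gt hki1, show s (i + 1) = a from ins_eq] at h1
        rcases le_or_gt k j with hkj | hkj
        · rw [show s' k = u k from ins_le hkj]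
          have h1 : s' (j + 1) ≤ s' k := sd_anti hs' hk (by omega)
          rw [show s' (j + 1) = a from ins_eq, show s' k = u k from ins_le hkj] at h1
          linarith
        · rcases eq_or_lt_of_le (show j + 1 ≤ k by omega) with hkj1 | hkj1
          · subst hkj1
            rw [show s' (j + 1) = a from ins_eq]; exact hka
          · rw [show s' k = u (k - 1) from ins_gt hkj1]
            exact hle (k - 1) (by omega)
  · intro hle k hk
    rcases le_or_gt k j with hkj | hkj
    · rcases le_or_gt k i with hki | hki
      · have h1 := hle k hk
        rwa [show s k = t k from ins_le hki, show s' k = u k from ins_le hkj] at h1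
      · have h1 := hle (k + 1) (by omega)
        rw [show s (k + 1) = t k from ins_gt (by omega)] at h1
        have h2 : s' (k + 1) ≤ s' k := sd_anti hs' hk (by omega)
        rw [show s' k = u k from ins_le hkj] at h2
        linarith
    · rcases le_or_gt k i with hki | hki
      · -- j < k ≤ i : contradiction
        exfalso
        have h1 := hle (j + 1) (by omega)
        rw [show s (j + 1) = t (j + 1) from ins_le (by omega),
          show s' (j + 1) = a from ins_eq] at h1
        have h2 : t i ≤ t (j + 1) := sd_anti ht (by omega) (by omega)
        have h3 : s (i + 1) ≤ s i - 1 := hs i (by omega)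
        rw [show s (i + 1) = a from ins_eq, show s i = t i from ins_le le_rfl] at h3
        linarith
      · have h1 := hle (k + 1) (by omega)
        rwa [show s (k + 1) = t k from ins_gt (by omega),
          show s' (k + 1) = u k from ins_gt (by omega)] at h1
end

section
/- Fix δ ∈ ℤ and let λ/μ be a minimal δ-balanced skew with set R of matched row pairs. Then e_δ(λ) = w · e_δ(μ), where w = ∏_{{i,j} ∈ R} (ij)_− ∈ 𝒟 (the factors act on pairwise disjoint pairs of positions, hence commute). Equivalently: for each matched pair {i, j} one has e_δ(λ)_i = −e_δ(μ)_j and e_δ(λ)_j = −e_δ(μ)_i, while e_δ(λ)_k = e_δ(μ)_k for every row index k not meeting the skew. -/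
lemma mem_skew_iff (lam mu : ℕ → ℕ) (n : ℕ) (hn : 1 ≤ n) (c : ℤ) :
    ((n : ℤ), c) ∈ skewOf lam mu ↔ (mu n : ℤ) < c ∧ c ≤ (lam n : ℤ) := by
  simp only [skewOf, cells, Set.mem_diff, Set.mem_setOf_eq, Int.toNat_natCast]
  omega

lemma boxRot_boxRot (a b : ℤ) (p : ℤ × ℤ) : boxRot a b (boxRot a b p) = p := by
  simp [boxRot]

lemma rowCells_skew_mem (lam mu : ℕ → ℕ) (n : ℕ) (hn : 1 ≤ n) (c : ℤ)
    (h1 : (mu n : ℤ) < c) (h2 : c ≤ (lam n : ℤ)) :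
    ((n : ℤ), c) ∈ rowCells (skewOf lam mu) (n : ℤ) :=
  ⟨(mem_skew_iff lam mu n hn c).mpr ⟨h1, h2⟩, rfl⟩

/-- If λ/μ is a minimal δ-balanced skew with π-rotation about
`(a/2, b/2)`, then for each matched pair of rows `{i, j}` one has
`e_δ(λ)_i = -e_δ(μ)_j` and `e_δ(λ)_j = -e_δ(μ)_i`, while `e_δ(λ)_k = e_δ(μ)_k`
for every row `k` not meeting the skew; i.e. `e_δ(λ)` is obtained from
`e_δ(μ)` by the product of the commuting reflections `(ij)_-` over matched
pairs. -/
theorem stmt7 (δ : ℤ) (lam mu : ℕ → ℕ) (hl : IsPartition lam) (hm : IsPartition mu)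
    (hsub : cells mu ⊆ cells lam) (a b : ℤ) (hw : MiBSWitness δ lam mu a b) :
    (∀ i j : ℕ, 1 ≤ i → 1 ≤ j →
        MatchedRows a b (skewOf lam mu) (i : ℤ) (j : ℤ) →
        eDel δ lam i = -(eDel δ mu j) ∧ eDel δ lam j = -(eDel δ mu i)) ∧
    (∀ k : ℕ, 1 ≤ k → rowCells (skewOf lam mu) (k : ℤ) = ∅ →
        eDel δ lam k = eDel δ mu k) := by
  obtain ⟨hba, -, -⟩ := hw
  set S := skewOf lam mu with hS
  constructor
  · intro i j hi hj hmatch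
    obtain ⟨⟨p, hpS, hpi⟩, himg⟩ := hmatch
    -- row i of the skew is nonempty: mu i < lam i
    have hp' : ((i : ℤ), p.2) ∈ S := by
      have : p = ((i : ℤ), p.2) := by rw [← hpi]
      rwa [← this]
    have hpbound := (mem_skew_iff lam mu i hi p.2).mp hp'
    have hii : (mu i : ℤ) < (lam i : ℤ) := lt_of_lt_of_le hpbound.1 hpbound.2
    -- j = a + 1 - i
    have hmemp : boxRot a b p ∈ rowCells S (j : ℤ) := by
      rw [← himg]; exact Set.mem_image_of_mem _ ⟨hpS, hpi⟩
    have hj' : (j : ℤ) = a + 1 - (i : ℤ) := by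
      have := hmemp.2
      simp only [boxRot, hpi] at this
      omega
    -- forward images
    have key : ∀ c : ℤ, (mu i : ℤ) < c → c ≤ (lam i : ℤ) →
        (mu j : ℤ) < b + 1 - c ∧ b + 1 - c ≤ (lam j : ℤ) := by
      intro c hc1 hc2
      have hmem : boxRot a b ((i : ℤ), c) ∈ rowCells S (j : ℤ) := by
        rw [← himg]; exact Set.mem_image_of_mem _ (rowCells_skew_mem lam mu i hi c hc1 hc2)
      have h1 := hmem.1
      have h2 := hmem.2
      simp only [boxRot] at h1 h2
      have : ((j : ℤ), b + 1 - c) ∈ S := by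
        rw [← h2]; exact h1
      exact (mem_skew_iff lam mu j hj _).mp this
    have k1 := key ((mu i : ℤ) + 1) (by omega) (by omega)
    have k2 := key (lam i) hii le_rfl
    -- backward images: rowCells S i = boxRot '' rowCells S j
    have hback : boxRot a b '' rowCells S (j : ℤ) = rowCells S (i : ℤ) := by
      rw [← himg, ← Set.image_comp]
      have : boxRot a b ∘ boxRot a b = id := funext (boxRot_boxRot a b)
      rw [this, Set.image_id]
    have hjj : (mu j : ℤ) < (lam j : ℤ) := by omega
    have key' : ∀ c : ℤ, (mu j : ℤ) < c → c ≤ (lam j : ℤ) →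
        (mu i : ℤ) < b + 1 - c ∧ b + 1 - c ≤ (lam i : ℤ) := by
      intro c hc1 hc2
      have hmem : boxRot a b ((j : ℤ), c) ∈ rowCells S (i : ℤ) := by
        rw [← hback]; exact Set.mem_image_of_mem _ (rowCells_skew_mem lam mu j hj c hc1 hc2)
      have h1 := hmem.1
      have h2 := hmem.2
      simp only [boxRot] at h1 h2
      have : ((i : ℤ), b + 1 - c) ∈ S := by
        rw [← h2]; exact h1
      exact (mem_skew_iff lam mu i hi _).mp this
    have k3 := key' ((mu j : ℤ) + 1) (by omega) (by omega)
    have k4 := key' (lam j) hjj le_rfl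
    have Hlamj : (lam j : ℤ) = b - (mu i : ℤ) := by omega
    have Hmuj : (mu j : ℤ) = b - (lam i : ℤ) := by omega
    have Hlami : (lam i : ℤ) = b - (mu j : ℤ) := by omega
    have Hmui : (mu i : ℤ) = b - (lam j : ℤ) := by omega
    have Rj : (j : ℝ) = (a : ℝ) + 1 - (i : ℝ) := by exact_mod_cast hj'
    have Rba : (b : ℝ) - (a : ℝ) = (δ : ℝ) - 1 := by exact_mod_cast hba
    have Rlamj : (lam j : ℝ) = (b : ℝ) - (mu i : ℝ) := by exact_mod_cast Hlamj
    have Rmuj : (mu j : ℝ) = (b : ℝ) - (lam i : ℝ) := by exact_mod_cast Hmuj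
    constructor
    · simp only [eDel, rho]; linarith
    · simp only [eDel, rho]; linarith
  · intro k hk hempty
    have hml : mu k ≤ lam k := by
      rcases Nat.eq_zero_or_pos (mu k) with h | h
      · omega
      · have : ((k : ℤ), (mu k : ℤ)) ∈ cells mu := by
          refine ⟨?_, ?_, ?_⟩ <;> simp [Int.toNat_natCast] <;> omega
        have := hsub this
        obtain ⟨-, -, h3⟩ := this
        simp only [Int.toNat_natCast] at h3
        exact_mod_cast h3
    have hlm : lam k ≤ mu k := by
      by_contra h
      push_neg at h
      have : ((k : ℤ), (mu k : ℤ) + 1) ∈ rowCells (skewOf lam mu) (k : ℤ) :=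
        rowCells_skew_mem lam mu k hk _ (by omega) (by exact_mod_cast h)
      rw [hempty] at this
      exact this
    have : lam k = mu k := le_antisymm hlm hml
    simp [eDel, this]
end

section
/- Fix δ ∈ ℤ. Let λ be a partition and let i ≠ j be row indices such that μ := λ − e_i + e_j (remove the last box of row i of λ and add a box at the end of row j) is also a partition. Then λ and μ are not in the same block: ¬(λ ∼^δ μ). Equivalently, if ν + e_i and ν + e_j are partitions with (ν + e_i) ∼^δ (ν + e_j), then i = j. -/
/-! ### Auxiliary lemmas for Statement 8: the charge-sum invariant -/

/-- The sum of δ-charges over a set of boxes. -/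
noncomputable def chgSum (δ : ℤ) (S : Set (ℤ × ℤ)) : ℤ := ∑ᶠ p ∈ S, chg δ p

lemma part_anti {f : ℕ → ℕ} (hf : IsPartition f) :
    ∀ k l : ℕ, 1 ≤ k → k ≤ l → f l ≤ f k := by
  intro k l hk hkl
  induction l, hkl using Nat.le_induction with
  | base => exact le_rfl
  | succ n hn ih => exact le_trans (hf.2.1 n (le_trans hk hn)) ih

lemma cells_finite {f : ℕ → ℕ} (hf : IsPartition f) : (cells f).Finite := by
  obtain ⟨h0, hdec, N, hN⟩ := hf
  have hsub : cells f ⊆ Set.Icc (1 : ℤ) (N : ℤ) ×ˢ Set.Icc (1 : ℤ) (f 1 : ℤ) := by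
    rintro ⟨x, y⟩ ⟨hx, hy, hle⟩
    dsimp only at hx hy hle
    simp only [Set.mem_prod, Set.mem_Icc]
    have hx0 : x.toNat ≥ 1 := by omega
    have hxN : x ≤ (N : ℤ) := by
      by_contra h
      push_neg at h
      have : f x.toNat = 0 := hN _ (by omega)
      omega
    have hb : f x.toNat ≤ f 1 := part_anti ⟨h0, hdec, N, hN⟩ 1 x.toNat le_rfl hx0
    refine ⟨⟨hx, hxN⟩, hy, ?_⟩
    exact le_trans hle (by exact_mod_cast hb)
  exact Set.Finite.subset ((Set.finite_Icc _ _).prod (Set.finite_Icc _ _)) hsub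

lemma boxRot_involutive (a b : ℤ) : Function.Involutive (boxRot a b) := by
  intro p
  simp only [boxRot, Prod.ext_iff]
  constructor <;> ring

lemma chg_boxRot {δ a b : ℤ} (h : b - a = δ - 1) (p : ℤ × ℤ) :
    chg δ (boxRot a b p) = - chg δ p := by
  simp only [chg, boxRot]
  omega

/-- If a finite set of boxes is invariant under a π-rotation about a point on
the δ-charge-0 diagonal, then its total δ-charge vanishes. -/
lemma chgSum_eq_zero_of_rot {δ a b : ℤ} (h : b - a = δ - 1) {T : Set (ℤ × ℤ)}
    (hT : T.Finite) (hrot : boxRot a b '' T = T) : chgSum δ T = 0 := by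
  have hinj : Set.InjOn (boxRot a b) T := ((boxRot_involutive a b).injective).injOn
  have h1 : chgSum δ T = ∑ᶠ p ∈ T, chg δ (boxRot a b p) := by
    unfold chgSum
    conv_lhs => rw [← hrot]
    exact finsum_mem_image hinj
  have h2 : ∑ᶠ p ∈ T, chg δ (boxRot a b p) = ∑ᶠ p ∈ T, - chg δ p := by
    apply finsum_mem_congr rfl
    intro p _
    exact chg_boxRot h p
  have h3 : ∑ᶠ p ∈ T, - chg δ p = - chgSum δ T := finsum_mem_neg_distrib _ hT
  omega

/-- A MiBS move preserves the charge sum. -/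
lemma chgSum_eq_of_MiBS {δ : ℤ} {lam mu : ℕ → ℕ} (h : IsMiBS δ lam mu) :
    chgSum δ (cells lam) = chgSum δ (cells mu) := by
  obtain ⟨hlam, hmu, hsub, a, b, hab, ⟨R1, R2, _, _, hun, hR⟩, _⟩ := h
  have hfin_lam := cells_finite hlam
  have hfin_mu := cells_finite hmu
  have hfin_skew : (skewOf lam mu).Finite := hfin_lam.subset Set.diff_subset
  have hrot : boxRot a b '' skewOf lam mu = skewOf lam mu := by
    rw [hun, Set.image_union, hR]
    have : boxRot a b '' R2 = R1 := by
      rw [← hR, ← Set.image_comp, (boxRot_involutive a b).comp_self, Set.image_id]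
    rw [this, Set.union_comm]
  have hskew0 : chgSum δ (skewOf lam mu) = 0 := chgSum_eq_zero_of_rot hab hfin_skew hrot
  have hdecomp : cells lam = cells mu ∪ skewOf lam mu := by
    rw [skewOf, Set.union_diff_cancel hsub]
  have : chgSum δ (cells lam) = chgSum δ (cells mu) + chgSum δ (skewOf lam mu) := by
    unfold chgSum
    rw [hdecomp]
    exact finsum_mem_union Set.disjoint_sdiff_right hfin_mu hfin_skew
  omega

/-- The charge sum is constant on blocks. -/
lemma chgSum_eq_of_simDelta {δ : ℤ} {f g : ℕ → ℕ} (h : simDelta δ f g) :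
    chgSum δ (cells f) = chgSum δ (cells g) := by
  induction h with
  | rel x y hxy => exact (chgSum_eq_of_MiBS hxy).symm
  | refl x => rfl
  | symm x y _ ih => exact ih.symm
  | trans x y z _ _ ih1 ih2 => exact ih1.trans ih2

/-- No pair of partitions of the form λ and λ - e_i + e_j with
`i ≠ j` lie in the same block. -/
theorem stmt8 (δ : ℤ) (lam : ℕ → ℕ) (hl : IsPartition lam) (i j : ℕ)
    (hi : 1 ≤ i) (hj : 1 ≤ j) (hij : i ≠ j) (hfi : 1 ≤ lam i)
    (hmu : IsPartition (addBox (removeBox lam i) j)) :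
    ¬ simDelta δ lam (addBox (removeBox lam i) j) := by
  intro hsim
  set ν := addBox (removeBox lam i) j with hν
  have hνj : ν j = lam j + 1 := by
    simp [hν, addBox, removeBox, hij.symm]
  have hνi : ν i = lam i - 1 := by
    simp [hν, addBox, removeBox, hij]
  have hνk : ∀ k, k ≠ i → k ≠ j → ν k = lam k := by
    intro k hki hkj
    simp [hν, addBox, removeBox, hki, hkj]
  -- the two distinguished boxes
  set bi : ℤ × ℤ := ((i : ℤ), (lam i : ℤ)) with hbi
  set bj : ℤ × ℤ := ((j : ℤ), (lam j : ℤ) + 1) with hbj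
  -- cells ν = insert bj (cells lam \ {bi})
  have hcells : cells ν = insert bj (cells lam \ {bi}) := by
    ext ⟨x, y⟩
    simp only [cells, Set.mem_setOf_eq, Set.mem_insert_iff, Set.mem_diff,
      Set.mem_singleton_iff, hbj, hbi, Prod.mk.injEq]
    constructor
    · rintro ⟨hx, hy, hle⟩
      by_cases hxi : x = (i : ℤ)
      · subst hxi
        have hti : ((i : ℤ)).toNat = i := by omega
        rw [hti, hνi] at hle
        right
        refine ⟨⟨hx, hy, ?_⟩, ?_⟩
        · rw [hti]; omega
        · rintro ⟨-, hy'⟩; omega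
      · by_cases hxj : x = (j : ℤ)
        · subst hxj
          have htj : ((j : ℤ)).toNat = j := by omega
          rw [htj, hνj] at hle
          by_cases hyt : y = (lam j : ℤ) + 1
          · left; exact ⟨rfl, hyt⟩
          · right
            refine ⟨⟨hx, hy, ?_⟩, ?_⟩
            · rw [htj]; omega
            · rintro ⟨hji, -⟩; omega
        · have hki : x.toNat ≠ i := by omega
          have hkj : x.toNat ≠ j := by omega
          rw [hνk _ hki hkj] at hle
          right
          refine ⟨⟨hx, hy, hle⟩, ?_⟩
          rintro ⟨hxi', -⟩
          exact hxi hxi'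
    · rintro (⟨hx, hy⟩ | ⟨⟨hx, hy, hle⟩, hne⟩)
      · subst hx; subst hy
        have htj : ((j : ℤ)).toNat = j := by omega
        refine ⟨by omega, by omega, ?_⟩
        rw [htj, hνj]; push_cast; omega
      · refine ⟨hx, hy, ?_⟩
        by_cases hxi : x = (i : ℤ)
        · subst hxi
          have hti : ((i : ℤ)).toNat = i := by omega
          rw [hti] at hle ⊢
          rw [hνi]
          have : y ≠ (lam i : ℤ) := fun hy' => hne ⟨rfl, hy'⟩
          omega
        · by_cases hxj : x = (j : ℤ)
          · subst hxj
            have htj : ((j : ℤ)).toNat = j := by omega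
            rw [htj] at hle ⊢
            rw [hνj]; push_cast; omega
          · have hki : x.toNat ≠ i := by omega
            have hkj : x.toNat ≠ j := by omega
            rw [hνk _ hki hkj]; exact hle
  -- bi ∈ cells lam, bj ∉ cells lam
  have hbi_mem : bi ∈ cells lam := by
    simp only [hbi, cells, Set.mem_setOf_eq]
    refine ⟨by omega, by omega, ?_⟩
    rw [show ((i : ℤ)).toNat = i by omega]
  have hbj_not : bj ∉ cells lam \ {bi} := by
    rintro ⟨⟨_, _, hle⟩, _⟩
    simp only [hbj] at hle
    have : ((j : ℤ)).toNat = j := by omega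
    rw [this] at hle
    omega
  have hfin_lam := cells_finite hl
  have hfin_diff : (cells lam \ {bi}).Finite := hfin_lam.subset Set.diff_subset
  -- compute the two charge sums
  have hsum_lam : chgSum δ (cells lam) = chg δ bi + chgSum δ (cells lam \ {bi}) := by
    unfold chgSum
    have hdecomp : cells lam = {bi} ∪ (cells lam \ {bi}) := by
      rw [Set.union_diff_cancel (Set.singleton_subset_iff.mpr hbi_mem)]
    conv_lhs => rw [hdecomp]
    rw [finsum_mem_union Set.disjoint_sdiff_right (Set.finite_singleton _) hfin_diff,
      finsum_mem_singleton]
  have hsum_nu : chgSum δ (cells ν) = chg δ bj + chgSum δ (cells lam \ {bi}) := by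
    unfold chgSum
    rw [hcells]
    rw [Set.insert_eq, finsum_mem_union (Set.disjoint_singleton_left.mpr hbj_not)
      (Set.finite_singleton _) hfin_diff, finsum_mem_singleton]
  have hkey := chgSum_eq_of_simDelta hsim
  rw [hsum_lam, hsum_nu] at hkey
  have hchg : chg δ bi = chg δ bj := by omega
  -- derive the arithmetic contradiction
  simp only [chg, hbi, hbj] at hchg
  have heq : (lam i : ℤ) - (i : ℤ) = (lam j : ℤ) + 1 - (j : ℤ) := by omega
  rcases lt_or_gt_of_ne hij with hlt | hgt
  · -- i < j : then j = i + 1 and lam i = lam j, contradicting ν partition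
    have hle : lam j ≤ lam i := part_anti hl i j hi (le_of_lt hlt)
    have hji : j = i + 1 ∧ lam i = lam j := by
      constructor <;> omega
    obtain ⟨hj1, hll⟩ := hji
    have hstep := hmu.2.1 i hi
    rw [← hj1, hνj, hνi] at hstep
    omega
  · -- j < i : lam j ≥ lam i contradicts the charge equation
    have hle : lam i ≤ lam j := part_anti hl j i hj (le_of_lt hgt)
    omega
end
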